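/- arXiv:math/0205331 — 5 statements merged into one kernel-verified Lean document; each statement's English description precedes it below -/
import Mathlib

section
/- For all reals a,b > 0, Cov(Lip_{a,b}) = Cov(Lip_{2a, b/2}). -/
open Cardinal Topology

/-- The least index where two sequences differ. -/
noncomputable def Delta {α : Type*} (x y : ℕ → α) : ℕ := sInf {n | x n ≠ y n}

/-- A set is homogeneous for a pair-coloring `c` if `c` is constant on pairs of
distinct elements of the set. -/
def IsHomog {X : Type*} (c : X → X → Fin 2) (H : Set X) : Prop :=
  ∃ i : Fin 2, ∀ x ∈ H, ∀ y ∈ H, x ≠ y → c x y = i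

/-- The homogeneity number of a pair-coloring: the least cardinality of a family of
homogeneous sets covering the space. -/
noncomputable def hm {X : Type*} (c : X → X → Fin 2) : Cardinal :=
  sInf { κ | ∃ F : Set (Set X), #F = κ ∧ (∀ H ∈ F, IsHomog c H) ∧ ⋃₀ F = Set.univ }

/-- The homogeneity number of the restriction of a coloring to a subset. -/
noncomputable def hmOn {X : Type*} (c : X → X → Fin 2) (Y : Set X) : Cardinal :=
  sInf { κ | ∃ F : Set (Set X), #F = κ ∧ (∀ H ∈ F, H ⊆ Y ∧ IsHomog c H) ∧ ⋃₀ F = Y }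

/-- A pair-coloring is continuous if it is continuous on `X × X` minus the diagonal. -/
def ContColoring {X : Type*} [TopologicalSpace X] (c : X → X → Fin 2) : Prop :=
  Continuous fun p : {q : X × X // q.1 ≠ q.2} => c p.val.1 p.val.2

/-- Symmetry of a pair-coloring on distinct points. -/
def SymmColoring {X : Type*} (c : X → X → Fin 2) : Prop :=
  ∀ x y : X, x ≠ y → c x y = c y x

/-- A continuous pair-coloring is reduced if no nonempty open set is homogeneous. -/
def Reduced {X : Type*} [TopologicalSpace X] (c : X → X → Fin 2) : Prop :=
  ContColoring c ∧ ∀ U : Set X, IsOpen U → U.Nonempty → ¬ IsHomog c U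

/-- The coloring `c_min` on the Cantor space: the parity of the first difference. -/
noncomputable def cmin : (ℕ → Bool) → (ℕ → Bool) → Fin 2 :=
  fun x y => if Even (Delta x y) then 0 else 1

/-- The coloring `c_parity` on the Baire space: the parity of the first difference. -/
noncomputable def cparity : (ℕ → ℕ) → (ℕ → ℕ) → Fin 2 :=
  fun x y => if Even (Delta x y) then 0 else 1

/-- The standard metric on the Cantor space: `dist x y = 2 ^ (-Δ(x, y))` for `x ≠ y`. -/
noncomputable def distC (x y : ℕ → Bool) : ℝ := by classical exact
  if x = y then 0 else (2 : ℝ) ^ (-(Delta x y : ℤ))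

/-- `f` is Lipschitz with constant `a` on the Cantor space. -/
def LipWithC (a : ℝ) (f : (ℕ → Bool) → (ℕ → Bool)) : Prop :=
  ∀ x y : ℕ → Bool, distC (f x) (f y) ≤ a * distC x y

/-- `Cov(Lip_{a,b})`: the least cardinality of a family `F` of `a`-Lipschitz functions
together with a family `G` of `b`-Lipschitz functions on the Cantor space such that for
every pair `(x, y)` either `f x = y` for some `f ∈ F` or `g y = x` for some `g ∈ G`. -/
noncomputable def CovLip (a b : ℝ) : Cardinal :=
  sInf {μ | ∃ F G : Set ((ℕ → Bool) → (ℕ → Bool)),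
    #F + #G = μ ∧ (∀ f ∈ F, LipWithC a f) ∧ (∀ g ∈ G, LipWithC b g) ∧
    ∀ x y : ℕ → Bool, (∃ f ∈ F, f x = y) ∨ (∃ g ∈ G, g y = x)}

namespace Stmt13Aux

/-- Shift. -/
def sh (x : ℕ → Bool) : ℕ → Bool := fun n => x (n + 1)

/-- Prepend `false`. -/
def co (x : ℕ → Bool) : ℕ → Bool := fun n => Nat.casesOn n false fun k => x k

lemma sh_co (x : ℕ → Bool) : sh (co x) = x := rfl

lemma co_ne {x y : ℕ → Bool} (h : x ≠ y) : co x ≠ co y := by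
  intro hc
  exact h (congrArg sh hc)

lemma delta_set_nonempty {x y : ℕ → Bool} (h : x ≠ y) : {n | x n ≠ y n}.Nonempty := by
  rcases Function.ne_iff.mp h with ⟨n, hn⟩
  exact ⟨n, hn⟩

lemma delta_mem {x y : ℕ → Bool} (h : x ≠ y) : x (Delta x y) ≠ y (Delta x y) :=
  Nat.sInf_mem (delta_set_nonempty h)

lemma delta_co {x y : ℕ → Bool} (h : x ≠ y) : Delta (co x) (co y) = Delta x y + 1 := by
  have hmem : co x (Delta x y + 1) ≠ co y (Delta x y + 1) := delta_mem h
  apply le_antisymm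
  · exact Nat.sInf_le hmem
  · show Delta x y + 1 ≤ sInf {n | co x n ≠ co y n}
    refine le_csInf ⟨Delta x y + 1, hmem⟩ ?_
    intro m hm
    cases m with
    | zero => exact absurd rfl hm
    | succ k =>
      have : Delta x y ≤ k := Nat.sInf_le hm
      omega

lemma distC_nonneg (x y : ℕ → Bool) : 0 ≤ distC x y := by
  unfold distC
  split
  · exact le_rfl
  · positivity

lemma distC_self (x : ℕ → Bool) : distC x x = 0 := by
  unfold distC; simp

lemma distC_co (x y : ℕ → Bool) : distC (co x) (co y) = (1 / 2) * distC x y := by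
  by_cases h : x = y
  · subst h; simp [distC_self]
  · have hc := co_ne h
    unfold distC
    rw [if_neg h, if_neg hc, delta_co h]
    have he : (-((Delta x y + 1 : ℕ) : ℤ)) = (-1) + (-(Delta x y : ℤ)) := by push_cast; ring
    rw [he, zpow_add₀ (two_ne_zero : (2:ℝ) ≠ 0)]
    norm_num

lemma distC_sh (x y : ℕ → Bool) : distC (sh x) (sh y) ≤ 2 * distC x y := by
  by_cases h : x = y
  · subst h; simp [distC_self]
  by_cases hs : sh x = sh y
  · rw [hs, distC_self]
    have := distC_nonneg x y; linarith
  · have hle : Delta x y ≤ Delta (sh x) (sh y) + 1 := by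
      apply Nat.sInf_le
      exact delta_mem hs
    unfold distC
    rw [if_neg h, if_neg hs]
    have h1 : (2:ℝ) ^ (-(Delta (sh x) (sh y) : ℤ)) ≤ 2 ^ ((1 : ℤ) - (Delta x y : ℤ)) := by
      apply zpow_le_zpow_right₀ one_le_two
      omega
    calc (2:ℝ) ^ (-(Delta (sh x) (sh y) : ℤ)) ≤ 2 ^ ((1 : ℤ) - (Delta x y : ℤ)) := h1
      _ = 2 * 2 ^ (-(Delta x y : ℤ)) := by
          rw [sub_eq_add_neg, zpow_add₀ (two_ne_zero), zpow_one]

lemma covLip_mono (a b a' b' : ℝ) (ha : 0 < a)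
    (Tx Ty : (ℕ → Bool) → (ℕ → Bool))
    (φ ψ : ((ℕ → Bool) → (ℕ → Bool)) → ((ℕ → Bool) → (ℕ → Bool)))
    (hφ : ∀ f, LipWithC a f → LipWithC a' (φ f))
    (hψ : ∀ g, LipWithC b g → LipWithC b' (ψ g))
    (h1 : ∀ f x y, f (Tx x) = Ty y → φ f x = y)
    (h2 : ∀ g x y, g (Ty y) = Tx x → ψ g y = x) :
    CovLip a' b' ≤ CovLip a b := by
  have hne : {μ | ∃ F G : Set ((ℕ → Bool) → (ℕ → Bool)),
      #F + #G = μ ∧ (∀ f ∈ F, LipWithC a f) ∧ (∀ g ∈ G, LipWithC b g) ∧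
      ∀ x y : ℕ → Bool, (∃ f ∈ F, f x = y) ∨ (∃ g ∈ G, g y = x)}.Nonempty := by
    refine ⟨_, Set.range (fun y => Function.const _ y), ∅, rfl, ?_, by simp, ?_⟩
    · rintro f ⟨y, rfl⟩ u v
      simp only [Function.const_apply, distC_self]
      exact mul_nonneg ha.le (distC_nonneg u v)
    · intro x y
      exact Or.inl ⟨Function.const _ y, ⟨y, rfl⟩, rfl⟩
  obtain ⟨F, G, hcard, hF, hG, hcov⟩ := csInf_mem hne
  have hmem : #(φ '' F) + #(ψ '' G) ∈ {μ | ∃ F G : Set ((ℕ → Bool) → (ℕ → Bool)),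
      #F + #G = μ ∧ (∀ f ∈ F, LipWithC a' f) ∧ (∀ g ∈ G, LipWithC b' g) ∧
      ∀ x y : ℕ → Bool, (∃ f ∈ F, f x = y) ∨ (∃ g ∈ G, g y = x)} := by
    refine ⟨φ '' F, ψ '' G, rfl, ?_, ?_, ?_⟩
    · rintro f ⟨f₀, hf₀, rfl⟩; exact hφ f₀ (hF f₀ hf₀)
    · rintro g ⟨g₀, hg₀, rfl⟩; exact hψ g₀ (hG g₀ hg₀)
    · intro x y
      rcases hcov (Tx x) (Ty y) with ⟨f, hf, he⟩ | ⟨g, hg, he⟩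
      · exact Or.inl ⟨φ f, Set.mem_image_of_mem φ hf, h1 f x y he⟩
      · exact Or.inr ⟨ψ g, Set.mem_image_of_mem ψ hg, h2 g x y he⟩
  calc CovLip a' b' ≤ #(φ '' F) + #(ψ '' G) := csInf_le' hmem
    _ ≤ #F + #G := add_le_add Cardinal.mk_image_le Cardinal.mk_image_le
    _ = CovLip a b := hcard

end Stmt13Aux

/-- For all reals `a, b > 0`, `Cov(Lip_{a,b}) = Cov(Lip_{2a, b/2})`. -/
theorem stmt13 (a b : ℝ) (ha : 0 < a) (hb : 0 < b) :
    CovLip a b = CovLip (2 * a) (b / 2) := by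
  apply le_antisymm
  · -- CovLip a b ≤ CovLip (2a, b/2) : transform a (2a,b/2)-cover into an (a,b)-cover
    apply Stmt13Aux.covLip_mono (2 * a) (b / 2) a b (by linarith)
      Stmt13Aux.co (fun y => y)
      (fun f => fun x => f (Stmt13Aux.co x)) (fun g => fun y => Stmt13Aux.sh (g y))
    · intro f hf x x'
      calc distC (f (Stmt13Aux.co x)) (f (Stmt13Aux.co x'))
          ≤ (2 * a) * distC (Stmt13Aux.co x) (Stmt13Aux.co x') := hf _ _
        _ = a * distC x x' := by rw [Stmt13Aux.distC_co]; ring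
    · intro g hg y y'
      calc distC (Stmt13Aux.sh (g y)) (Stmt13Aux.sh (g y'))
          ≤ 2 * distC (g y) (g y') := Stmt13Aux.distC_sh _ _
        _ ≤ 2 * ((b / 2) * distC y y') := by
            have := hg y y'; linarith
        _ = b * distC y y' := by ring
    · intro f x y he; exact he
    · intro g x y he
      rw [he]; exact Stmt13Aux.sh_co x
  · -- CovLip (2a, b/2) ≤ CovLip a b
    apply Stmt13Aux.covLip_mono a b (2 * a) (b / 2) ha
      (fun x => x) Stmt13Aux.co
      (fun f => fun x => Stmt13Aux.sh (f x)) (fun g => fun y => g (Stmt13Aux.co y))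
    · intro f hf x x'
      calc distC (Stmt13Aux.sh (f x)) (Stmt13Aux.sh (f x'))
          ≤ 2 * distC (f x) (f x') := Stmt13Aux.distC_sh _ _
        _ ≤ 2 * (a * distC x x') := by have := hf x x'; linarith
        _ = (2 * a) * distC x x' := by ring
    · intro g hg y y'
      calc distC (g (Stmt13Aux.co y)) (g (Stmt13Aux.co y'))
          ≤ b * distC (Stmt13Aux.co y) (Stmt13Aux.co y') := hg _ _
        _ = (b / 2) * distC y y' := by rw [Stmt13Aux.distC_co]; ring
    · intro f x y he
      rw [he]; exact Stmt13Aux.sh_co y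
    · intro g x y he; exact he
end

section
/- Let a,b > 0 be reals. If there is an integer c ∈ ℤ such that 2^{c-1} ≤ a and 2^{-c} ≤ b, then Cov(Lip_{a,b}) = hm(c_min); otherwise Cov(Lip_{a,b}) = 2^{ℵ₀}. -/
open Cardinal Topology

/-!
Splitting `z` into its even and odd coordinates `(u, w)`, the first difference `Δ(z, z')` is
even exactly when `u ≠ u'` and `w, w'` agree below `Δ(u, u')`, i.e. when the pair first differs
in its first coordinate. So, after padding the coordinates so that the exponents `c - 1` and
`-c` appear as shifts, a `c_min`-homogeneous set of colour `0` is the graph of a partial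
`2 ^ (c - 1)`-Lipschitz map `u ↦ w`, and one of colour `1` the graph of a partial
`2 ^ (-c)`-Lipschitz map `w ↦ u`. Partial `2 ^ j`-Lipschitz maps of the Cantor space extend to
total ones (read each output bit off a point of the domain approximating the input deeply enough),
which gives `Cov(Lip_{a,b}) ≤ hm(c_min)`. Conversely, read through stretched coordinates, the
graph of any Lipschitz map is homogeneous of colour `0` and the graph of its converse of colour
`1`, so `hm(c_min) ≤ Cov(Lip_{a,b})` for all `a, b`.

If no `c` fits, then `a < 2 ^ c` and `b < 2 ^ (-c)` for `c = ⌊log₂ a⌋ + 1`. Since distances are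
powers of two, every `f ∈ F` is then `2 ^ (c - 1)`-Lipschitz and every `g ∈ G` is
`2 ^ (-c - 1)`-Lipschitz, and each of them covers at most one of the pairs
`(0^m t, 0^n t)` with `m - n = c`; hence `#F + #G ≥ 2 ^ ℵ₀`, and constant maps show equality.
-/

namespace Cantor

section Delta

variable {α : Type*} {x y z : ℕ → α} {m n i : ℕ}

def Agree (n : ℕ) (x y : ℕ → α) : Prop := ∀ i < n, x i = y i

theorem Agree.rfl : Agree n x x := fun _ _ => _root_.rfl

theorem Agree.symm (h : Agree n x y) : Agree n y x := fun i hi => (h i hi).symm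

theorem Agree.trans (h : Agree n x y) (h' : Agree n y z) : Agree n x z :=
  fun i hi => (h i hi).trans (h' i hi)

theorem Agree.mono (h : Agree n x y) (hmn : m ≤ n) : Agree m x y :=
  fun i hi => h i (hi.trans_le hmn)

theorem apply_eq_of_lt_delta (h : i < Delta x y) : x i = y i :=
  not_not.1 (Nat.notMem_of_lt_sInf h)

theorem apply_delta_ne (h : x ≠ y) : x (Delta x y) ≠ y (Delta x y) :=
  Nat.sInf_mem (Function.ne_iff.1 h)

theorem agree_delta : Agree (Delta x y) x y := fun _ => apply_eq_of_lt_delta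

theorem le_delta_of_agree (h : Agree n x y) (hxy : x ≠ y) : n ≤ Delta x y :=
  not_lt.1 fun hlt => apply_delta_ne hxy (h _ hlt)

theorem delta_eq_of_agree (h : Agree n x y) (hn : x n ≠ y n) : Delta x y = n :=
  le_antisymm (Nat.sInf_le hn) (le_delta_of_agree h fun hxy => hn (hxy ▸ _root_.rfl))

end Delta

section Metric

variable {x y : ℕ → Bool} {a b : ℝ} {f : (ℕ → Bool) → ℕ → Bool} {j t : ℤ}

theorem distC_self (x : ℕ → Bool) : distC x x = 0 := by simp [distC]

theorem distC_of_ne (h : x ≠ y) : distC x y = 2 ^ (-(Delta x y : ℤ)) := by simp [distC, h]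

theorem distC_nonneg (x y : ℕ → Bool) : 0 ≤ distC x y := by
  by_cases h : x = y
  · simp [h, distC_self]
  · rw [distC_of_ne h]; positivity

theorem distC_le_two_zpow_iff : distC x y ≤ 2 ^ (-t) ↔ ∀ k : ℕ, (k : ℤ) < t → x k = y k := by
  by_cases h : x = y
  · simp [h, distC_self, zpow_nonneg]
  rw [distC_of_ne h, zpow_le_zpow_iff_right₀ (one_lt_two (α := ℝ)), neg_le_neg_iff]
  refine ⟨fun ht k hk => apply_eq_of_lt_delta (by omega), fun H => ?_⟩
  by_contra hlt
  exact apply_delta_ne h (H _ (by omega))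

/-- Distances are powers of two, so a strict bound improves by a factor of two. -/
theorem distC_le_of_lt_two_zpow (h : distC x y < 2 ^ (t + 1)) : distC x y ≤ 2 ^ t := by
  by_cases hxy : x = y
  · simp [hxy, distC_self, zpow_nonneg]
  rw [distC_of_ne hxy, zpow_lt_zpow_iff_right₀ (one_lt_two (α := ℝ))] at h
  rw [distC_of_ne hxy, zpow_le_zpow_iff_right₀ (one_lt_two (α := ℝ))]
  omega

theorem lipWithC_const (ha : 0 ≤ a) (z : ℕ → Bool) : LipWithC a fun _ => z := fun x y => by
  simpa [distC_self] using mul_nonneg ha (distC_nonneg x y)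

theorem _root_.LipWithC.mono (hf : LipWithC a f) (hab : a ≤ b) : LipWithC b f := fun x y =>
  (hf x y).trans (mul_le_mul_of_nonneg_right hab (distC_nonneg x y))

theorem _root_.LipWithC.two_zpow_of_lt (hf : LipWithC a f) (ha : a < 2 ^ (j + 1)) :
    LipWithC (2 ^ j) f := by
  intro x y
  by_cases hxy : x = y
  · simp [hxy, distC_self]
  have hlt : distC (f x) (f y) < 2 ^ (j - Delta x y + 1) :=
    calc distC (f x) (f y) ≤ a * distC x y := hf x y
      _ < 2 ^ (j + 1) * 2 ^ (-(Delta x y : ℤ)) := by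
        rw [distC_of_ne hxy]; exact mul_lt_mul_of_pos_right ha (by positivity)
      _ = 2 ^ (j - Delta x y + 1) := by rw [← zpow_add₀ two_ne_zero]; ring_nf
  rw [distC_of_ne hxy, ← zpow_add₀ two_ne_zero]
  exact distC_le_of_lt_two_zpow hlt

theorem lipWithC_two_zpow_iff :
    LipWithC (2 ^ j) f ↔ ∀ x y (n k : ℕ), Agree n x y → (k : ℤ) + j < n → f x k = f y k := by
  refine ⟨fun hf x y n k hxy hk => ?_, fun H x y => ?_⟩
  · have hdist : distC x y ≤ 2 ^ (-(n : ℤ)) :=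
      distC_le_two_zpow_iff.2 fun i hi => hxy i (by exact_mod_cast hi)
    have : distC (f x) (f y) ≤ 2 ^ (-((n : ℤ) - j)) :=
      calc distC (f x) (f y) ≤ 2 ^ j * distC x y := hf x y
        _ ≤ 2 ^ j * 2 ^ (-(n : ℤ)) := by gcongr
        _ = 2 ^ (-((n : ℤ) - j)) := by rw [← zpow_add₀ two_ne_zero]; ring_nf
    exact distC_le_two_zpow_iff.1 this k (by omega)
  · by_cases hxy : x = y
    · simp [hxy, distC_self]
    have : distC (f x) (f y) ≤ 2 ^ (-((Delta x y : ℤ) - j)) :=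
      distC_le_two_zpow_iff.2 fun k hk => H x y _ k agree_delta (by omega)
    rwa [distC_of_ne hxy, ← zpow_add₀ two_ne_zero, ← sub_eq_add_neg, ← neg_sub]

end Metric

section Extension

open Classical

/-- `R` is the graph of a partial `2 ^ j`-Lipschitz map; compare `lipWithC_two_zpow_iff`. -/
def IsLipGraph (j : ℤ) (R : Set ((ℕ → Bool) × (ℕ → Bool))) : Prop :=
  ∀ p ∈ R, ∀ q ∈ R, ∀ n k : ℕ, Agree n p.1 q.1 → (k : ℤ) + j < n → p.2 k = q.2 k

variable {j : ℤ} {R : Set ((ℕ → Bool) × (ℕ → Bool))} {x y : ℕ → Bool} {n k N : ℕ}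

def trunc (n : ℕ) (x : ℕ → Bool) : ℕ → Bool := fun i => if i < n then x i else false

theorem agree_trunc : Agree n x (trunc n x) := fun i hi => by simp [trunc, hi]

theorem trunc_eq_of_agree (h : Agree n x y) : trunc n x = trunc n y := by
  funext i
  by_cases hi : i < n <;> simp [trunc, hi, h i]

/-- A point of `R` whose first coordinate agrees with `x` below `n`, if there is one; it depends
only on the first `n` values of `x`. -/
noncomputable def approx (R : Set ((ℕ → Bool) × (ℕ → Bool))) (n : ℕ) (x : ℕ → Bool) :
    (ℕ → Bool) × (ℕ → Bool) :=
  Classical.epsilon fun p => p ∈ R ∧ Agree n (trunc n x) p.1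

theorem approx_spec (h : ∃ p ∈ R, Agree n x p.1) :
    approx R n x ∈ R ∧ Agree n x (approx R n x).1 := by
  obtain ⟨p, hp, hxp⟩ := h
  have := Classical.epsilon_spec (p := fun p => p ∈ R ∧ Agree n (trunc n x) p.1)
    ⟨p, hp, agree_trunc.symm.trans hxp⟩
  exact ⟨this.1, agree_trunc.trans this.2⟩

theorem approx_congr (h : Agree n x y) : approx R n x = approx R n y := by
  rw [approx, approx, trunc_eq_of_agree h]

noncomputable def depth (R : Set ((ℕ → Bool) × (ℕ → Bool))) (x : ℕ → Bool) (N : ℕ) : ℕ :=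
  Nat.findGreatest (fun m => ∃ p ∈ R, Agree m x p.1) N

theorem exists_agree_depth (hR : R.Nonempty) : ∃ p ∈ R, Agree (depth R x N) x p.1 :=
  Nat.findGreatest_spec (P := fun m => ∃ p ∈ R, Agree m x p.1) (Nat.zero_le N)
    ⟨hR.some, hR.some_mem, fun _ h => absurd h (Nat.not_lt_zero _)⟩

theorem le_depth {m : ℕ} (hmN : m ≤ N) (h : ∃ p ∈ R, Agree m x p.1) : m ≤ depth R x N :=
  Nat.le_findGreatest hmN h

noncomputable def extend (R : Set ((ℕ → Bool) × (ℕ → Bool))) (j : ℤ) (x : ℕ → Bool) :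
    ℕ → Bool :=
  fun k => (approx R (depth R x (k + j.toNat + 1)) x).2 k

theorem exists_agree_of_agree {m : ℕ} (hxy : Agree n x y) (hmn : m ≤ n)
    (h : ∃ p ∈ R, Agree m x p.1) : ∃ p ∈ R, Agree m y p.1 :=
  let ⟨p, hp, hxp⟩ := h
  ⟨p, hp, (hxy.mono hmn).symm.trans hxp⟩

theorem extend_apply_eq (hR : R.Nonempty) (hlip : IsLipGraph j R) (hxy : Agree n x y)
    (hk : (k : ℤ) + j < n) : extend R j x k = extend R j y k := by
  set N := k + j.toNat + 1
  set m := min N n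
  have hmN : m ≤ N := min_le_left _ _
  have hmn : m ≤ n := min_le_right _ _
  by_cases hm : ∃ p ∈ R, Agree m x p.1
  · obtain ⟨hpx, hx⟩ := approx_spec (exists_agree_depth (x := x) (N := N) hR)
    obtain ⟨hpy, hy⟩ := approx_spec (exists_agree_depth (x := y) (N := N) hR)
    have hxm := le_depth hmN hm
    have hym := le_depth hmN (exists_agree_of_agree hxy hmn hm)
    exact hlip _ hpx _ hpy m k ((hx.mono hxm).symm.trans ((hxy.mono hmn).trans (hy.mono hym)))
      (by omega)
  · -- no point of `R` reaches depth `m` near `x` or `y`, so both depths are equal and below `n`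
    have hm' : ¬∃ p ∈ R, Agree m y p.1 := fun h => hm (exists_agree_of_agree hxy.symm hmn h)
    have depth_lt : ∀ {z}, (¬∃ p ∈ R, Agree m z p.1) → depth R z N < m := fun {z} hz =>
      not_le.1 fun hle => hz ((exists_agree_depth hR).imp fun _ ⟨hp, h⟩ => ⟨hp, h.mono hle⟩)
    have hx := depth_lt hm
    have hy := depth_lt hm'
    have heq : depth R x N = depth R y N := le_antisymm
      (le_depth (Nat.findGreatest_le N)
        (exists_agree_of_agree hxy (by omega) (exists_agree_depth hR)))
      (le_depth (Nat.findGreatest_le N)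
        (exists_agree_of_agree hxy.symm (by omega) (exists_agree_depth hR)))
    show (approx R (depth R x N) x).2 k = (approx R (depth R y N) y).2 k
    rw [heq, approx_congr (hxy.mono (by omega))]

theorem extend_eq (hlip : IsLipGraph j R) {p : (ℕ → Bool) × (ℕ → Bool)} (hp : p ∈ R) :
    extend R j p.1 = p.2 := by
  funext k
  have hdepth : depth R p.1 (k + j.toNat + 1) = k + j.toNat + 1 :=
    Nat.findGreatest_eq ⟨p, hp, Agree.rfl⟩
  obtain ⟨hq, hpq⟩ := approx_spec (R := R) ⟨p, hp, Agree.rfl (n := k + j.toNat + 1)⟩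
  rw [extend, hdepth]
  exact hlip _ hq _ hp _ k hpq.symm (by omega)

theorem IsLipGraph.exists_lipWithC (hlip : IsLipGraph j R) :
    ∃ f, LipWithC (2 ^ j) f ∧ ∀ p ∈ R, f p.1 = p.2 := by
  rcases R.eq_empty_or_nonempty with rfl | hR
  · exact ⟨fun _ _ => false, lipWithC_const (by positivity) _, by simp⟩
  · exact ⟨extend R j, lipWithC_two_zpow_iff.2 fun _ _ _ _ => extend_apply_eq hR hlip,
      fun _ => extend_eq hlip⟩

end Extension

section Interleave

variable {α : Type*} {u u' w w' z : ℕ → α} {m n i : ℕ}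

def interleave (u w : ℕ → α) : ℕ → α := fun n => if n % 2 = 0 then u (n / 2) else w (n / 2)

def evens (z : ℕ → α) : ℕ → α := fun i => z (2 * i)

def odds (z : ℕ → α) : ℕ → α := fun i => z (2 * i + 1)

@[simp] theorem interleave_two_mul (u w : ℕ → α) (i : ℕ) : interleave u w (2 * i) = u i := by
  simp [interleave]

@[simp] theorem interleave_two_mul_add_one (u w : ℕ → α) (i : ℕ) :
    interleave u w (2 * i + 1) = w i := by
  simp only [interleave, Nat.mul_add_mod_self_left, Nat.mul_add_div two_pos]
  rfl

theorem interleave_evens_odds (z : ℕ → α) : interleave (evens z) (odds z) = z := by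
  funext n
  obtain ⟨i, rfl | rfl⟩ := Nat.even_or_odd' n <;> simp [evens, odds]

theorem interleave_inj : interleave u w = interleave u' w' ↔ u = u' ∧ w = w' := by
  refine ⟨fun h => ⟨funext fun i => ?_, funext fun i => ?_⟩, fun ⟨hu, hw⟩ => hu ▸ hw ▸ rfl⟩
  · simpa using congr_fun h (2 * i)
  · simpa using congr_fun h (2 * i + 1)

theorem agree_interleave (hu : Agree m u u') (hw : Agree n w w') :
    Agree (min (2 * m) (2 * n + 1)) (interleave u w) (interleave u' w') := by
  intro k hk
  obtain ⟨i, rfl | rfl⟩ := Nat.even_or_odd' k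
  · simpa using hu i (by omega)
  · simpa using hw i (by omega)

theorem delta_interleave_of_agree_left (hu : u ≠ u') (hw : Agree (Delta u u') w w') :
    Delta (interleave u w) (interleave u' w') = 2 * Delta u u' :=
  delta_eq_of_agree ((agree_interleave agree_delta hw).mono (by omega))
    (by simpa using apply_delta_ne hu)

theorem delta_interleave_of_agree_right (hw : w ≠ w') (hu : Agree (Delta w w' + 1) u u') :
    Delta (interleave u w) (interleave u' w') = 2 * Delta w w' + 1 :=
  delta_eq_of_agree ((agree_interleave hu agree_delta).mono (by omega))
    (by simpa using apply_delta_ne hw)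

theorem interleave_dichotomy (h : interleave u w ≠ interleave u' w') :
    (u ≠ u' ∧ Agree (Delta u u') w w') ∨ (w ≠ w' ∧ Agree (Delta w w' + 1) u u') := by
  by_cases hu : u = u'
  · subst hu
    exact .inr ⟨fun hw => h (hw ▸ rfl), Agree.rfl⟩
  by_cases hw : Agree (Delta u u') w w'
  · exact .inl ⟨hu, hw⟩
  have hww : w ≠ w' := fun h => hw (h ▸ Agree.rfl)
  have hlt : Delta w w' < Delta u u' := not_le.1 fun hle => hw (agree_delta.mono hle)
  exact .inr ⟨hww, agree_delta.mono hlt⟩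

theorem even_delta_interleave_iff (h : interleave u w ≠ interleave u' w') :
    Even (Delta (interleave u w) (interleave u' w')) ↔ u ≠ u' ∧ Agree (Delta u u') w w' := by
  refine ⟨fun he => (interleave_dichotomy h).resolve_right fun ⟨hw, hu⟩ => ?_,
    fun ⟨hu, hw⟩ => ⟨Delta u u', by rw [delta_interleave_of_agree_left hu hw]; ring⟩⟩
  rw [delta_interleave_of_agree_right hw hu] at he
  exact Nat.not_even_two_mul_add_one _ he

theorem not_even_delta_interleave_iff (h : interleave u w ≠ interleave u' w') :
    ¬Even (Delta (interleave u w) (interleave u' w')) ↔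
      w ≠ w' ∧ Agree (Delta w w' + 1) u u' := by
  refine ⟨fun he => (interleave_dichotomy h).resolve_left fun ⟨hu, hw⟩ => ?_,
    fun ⟨hw, hu⟩ => ?_⟩
  · exact he ((even_delta_interleave_iff h).2 ⟨hu, hw⟩)
  · rw [delta_interleave_of_agree_right hw hu]
    exact Nat.not_even_two_mul_add_one _

end Interleave

section Spread

variable {u u' : ℕ → Bool} {r s n i : ℕ}

def spread (r s : ℕ) (u : ℕ → Bool) : ℕ → Bool := fun i => if i < s then false else u ((i - s) / r)

@[simp] theorem spread_apply_add_mul (hr : 0 < r) (u : ℕ → Bool) (i : ℕ) :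
    spread r s u (s + r * i) = u i := by
  simp [spread, Nat.mul_div_cancel_left i hr]

theorem spread_injective (hr : 0 < r) : Function.Injective (spread r s) := fun u u' h =>
  funext fun i => by simpa [hr] using congr_fun h (s + r * i)

theorem agree_spread (h : Agree n u u') : Agree (s + r * n) (spread r s u) (spread r s u') := by
  intro i hi
  by_cases his : i < s
  · simp [spread, his]
  · simp only [spread, his, if_false]
    exact h _ (Nat.div_lt_of_lt_mul (by omega))

end Spread

theorem cmin_eq_zero_iff {x y : ℕ → Bool} : cmin x y = 0 ↔ Even (Delta x y) := by
  unfold cmin; split_ifs with h <;> simp [h]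

theorem cmin_eq_one_iff {x y : ℕ → Bool} : cmin x y = 1 ↔ ¬Even (Delta x y) := by
  unfold cmin; split_ifs with h <;> simp [h]

section Cardinals

theorem hm_le {X : Type*} {c : X → X → Fin 2} {𝓕 : Set (Set X)}
    (hhom : ∀ H ∈ 𝓕, IsHomog c H) (hcov : ⋃₀ 𝓕 = Set.univ) : hm c ≤ #𝓕 :=
  csInf_le' ⟨𝓕, rfl, hhom, hcov⟩

theorem exists_cover_card_eq_hm {X : Type*} (c : X → X → Fin 2) :
    ∃ 𝓕 : Set (Set X), #𝓕 = hm c ∧ (∀ H ∈ 𝓕, IsHomog c H) ∧ ⋃₀ 𝓕 = Set.univ :=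
  csInf_mem (s := {κ | ∃ 𝓕 : Set (Set X), #𝓕 = κ ∧ (∀ H ∈ 𝓕, IsHomog c H) ∧ ⋃₀ 𝓕 = Set.univ})
    ⟨_, Set.range fun x : X => {x}, rfl,
      by rintro _ ⟨x, rfl⟩; exact ⟨0, fun y hy z hz hyz => absurd (hy.trans hz.symm) hyz⟩,
      Set.sUnion_eq_univ_iff.2 fun x => ⟨{x}, ⟨x, rfl⟩, rfl⟩⟩

variable {a b : ℝ} {F G : Set ((ℕ → Bool) → ℕ → Bool)}

theorem mk_cantor : #(ℕ → Bool) = 𝔠 := by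
  rw [← power_def, mk_bool, mk_nat, two_power_aleph0]

theorem covLip_le (hF : ∀ f ∈ F, LipWithC a f) (hG : ∀ g ∈ G, LipWithC b g)
    (hcov : ∀ x y, (∃ f ∈ F, f x = y) ∨ ∃ g ∈ G, g y = x) : CovLip a b ≤ #F + #G :=
  csInf_le' ⟨F, G, rfl, hF, hG, hcov⟩

theorem exists_const_cover (ha : 0 ≤ a) :
    ∃ F G : Set ((ℕ → Bool) → ℕ → Bool), #F + #G ≤ 𝔠 ∧ (∀ f ∈ F, LipWithC a f) ∧
      (∀ g ∈ G, LipWithC b g) ∧ ∀ x y, (∃ f ∈ F, f x = y) ∨ ∃ g ∈ G, g y = x :=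
  ⟨Set.range fun z _ => z, ∅,
    by simp only [mk_eq_zero, add_zero, ← mk_cantor]; exact mk_range_le,
    by rintro _ ⟨z, rfl⟩; exact lipWithC_const ha z, by simp,
    fun _ y => .inl ⟨_, ⟨y, rfl⟩, rfl⟩⟩

theorem covLip_le_continuum (ha : 0 ≤ a) : CovLip a b ≤ 𝔠 :=
  let ⟨_, _, hcard, hF, hG, hcov⟩ := exists_const_cover (b := b) ha
  (covLip_le hF hG hcov).trans hcard

theorem le_covLip (ha : 0 ≤ a) {κ : Cardinal}
    (h : ∀ F G : Set ((ℕ → Bool) → ℕ → Bool), (∀ f ∈ F, LipWithC a f) →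
      (∀ g ∈ G, LipWithC b g) → (∀ x y, (∃ f ∈ F, f x = y) ∨ ∃ g ∈ G, g y = x) →
      κ ≤ #F + #G) :
    κ ≤ CovLip a b :=
  let ⟨F, G, _, hF, hG, hcov⟩ := exists_const_cover (b := b) ha
  le_csInf ⟨_, F, G, rfl, hF, hG, hcov⟩ fun _ ⟨F, G, hμ, hF, hG, hcov⟩ => hμ ▸ h F G hF hG hcov

end Cardinals

section UpperBound

variable {H : Set (ℕ → Bool)}

theorem _root_.IsHomog.even_or_not_even (hH : IsHomog cmin H) :
    (∀ z ∈ H, ∀ z' ∈ H, z ≠ z' → Even (Delta z z')) ∨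
      ∀ z ∈ H, ∀ z' ∈ H, z ≠ z' → ¬Even (Delta z z') := by
  obtain ⟨i, hi⟩ := hH
  fin_cases i
  · exact .inl fun z hz z' hz' h => cmin_eq_zero_iff.1 (hi z hz z' hz' h)
  · exact .inr fun z hz z' hz' h => cmin_eq_one_iff.1 (hi z hz z' hz' h)

theorem isLipGraph_of_even (p q : ℕ) (hH : ∀ z ∈ H, ∀ z' ∈ H, z ≠ z' → Even (Delta z z')) :
    IsLipGraph ((q : ℤ) - p) {r | interleave (spread 1 p r.1) (spread 1 q r.2) ∈ H} := by
  rintro ⟨x, y⟩ hxy ⟨x', y'⟩ hxy' n k hx hk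
  by_cases hcode :
      interleave (spread 1 p x) (spread 1 q y) = interleave (spread 1 p x') (spread 1 q y')
  · rw [spread_injective one_pos (interleave_inj.1 hcode).2]
  obtain ⟨hu, hw⟩ := (even_delta_interleave_iff hcode).1 (hH _ hxy _ hxy' hcode)
  have hle : p + 1 * n ≤ Delta (spread 1 p x) (spread 1 p x') :=
    le_delta_of_agree (agree_spread hx) hu
  have := hw (q + 1 * k) (by omega)
  rwa [spread_apply_add_mul one_pos, spread_apply_add_mul one_pos] at this

theorem isLipGraph_of_not_even (p q : ℕ)
    (hH : ∀ z ∈ H, ∀ z' ∈ H, z ≠ z' → ¬Even (Delta z z')) :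
    IsLipGraph ((p : ℤ) - q - 1) {r | interleave (spread 1 p r.2) (spread 1 q r.1) ∈ H} := by
  rintro ⟨y, x⟩ hxy ⟨y', x'⟩ hxy' n k hy hk
  by_cases hcode :
      interleave (spread 1 p x) (spread 1 q y) = interleave (spread 1 p x') (spread 1 q y')
  · rw [spread_injective one_pos (interleave_inj.1 hcode).1]
  obtain ⟨hw, hu⟩ := (not_even_delta_interleave_iff hcode).1 (hH _ hxy _ hxy' hcode)
  have hle : q + 1 * n ≤ Delta (spread 1 q y) (spread 1 q y') :=
    le_delta_of_agree (agree_spread hy) hw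
  have := hu (p + 1 * k) (by omega)
  rwa [spread_apply_add_mul one_pos, spread_apply_add_mul one_pos] at this

theorem covLip_le_hm_cmin {a b : ℝ} (c : ℤ) (hca : (2 : ℝ) ^ (c - 1) ≤ a)
    (hcb : (2 : ℝ) ^ (-c) ≤ b) : CovLip a b ≤ hm cmin := by
  obtain ⟨𝓕, h𝓕, hhom, hcov⟩ := exists_cover_card_eq_hm cmin
  set p := (1 - c).toNat
  set q := (c - 1).toNat
  set code : (ℕ → Bool) → (ℕ → Bool) → ℕ → Bool := fun x y =>
    interleave (spread 1 p x) (spread 1 q y)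
  set 𝓔 : Set 𝓕 := {H | ∀ z ∈ H.1, ∀ z' ∈ H.1, z ≠ z' → Even (Delta z z')}
  have hf (H : 𝓔) : ∃ f, LipWithC a f ∧ ∀ x y, code x y ∈ H.1.1 → f x = y := by
    obtain ⟨f, hf, hfR⟩ := (isLipGraph_of_even p q H.2).exists_lipWithC
    exact ⟨f, hf.mono (by rwa [show (q : ℤ) - p = c - 1 by omega]), fun x y h => hfR (x, y) h⟩
  have hg (H : ↥𝓔ᶜ) : ∃ g, LipWithC b g ∧ ∀ x y, code x y ∈ H.1.1 → g y = x := by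
    obtain ⟨g, hg, hgR⟩ :=
      (isLipGraph_of_not_even p q
        ((hhom _ H.1.2).even_or_not_even.resolve_left H.2)).exists_lipWithC
    exact ⟨g, hg.mono (by rwa [show (p : ℤ) - q - 1 = -c by omega]), fun x y h => hgR (y, x) h⟩
  choose f hf hfcode using hf
  choose g hg hgcode using hg
  have hcover : ∀ x y, (∃ f' ∈ Set.range f, f' x = y) ∨ ∃ g' ∈ Set.range g, g' y = x := by
    intro x y
    obtain ⟨H, hH, hz⟩ := Set.sUnion_eq_univ_iff.1 hcov (code x y)
    by_cases hE : ⟨H, hH⟩ ∈ 𝓔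
    · exact .inl ⟨_, ⟨⟨_, hE⟩, rfl⟩, hfcode _ x y hz⟩
    · exact .inr ⟨_, ⟨⟨_, hE⟩, rfl⟩, hgcode _ x y hz⟩
  calc CovLip a b ≤ #(Set.range f) + #(Set.range g) :=
        covLip_le (Set.forall_mem_range.2 hf) (Set.forall_mem_range.2 hg) hcover
    _ ≤ #𝓔 + #↥𝓔ᶜ := add_le_add mk_range_le mk_range_le
    _ = hm cmin := by rw [mk_sum_compl, h𝓕]

end UpperBound

section LowerBound

variable {j : ℕ} {f g : (ℕ → Bool) → ℕ → Bool} {z z' : ℕ → Bool}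

/- A `2 ^ j`-Lipschitz map moves first differences down by at most `j`; blocks of length
`2 j + 2`, with the second coordinate offset by `j + 1`, absorb that loss in both directions. -/

def graphCode (j : ℕ) (f : (ℕ → Bool) → ℕ → Bool) : Set (ℕ → Bool) :=
  {z | f (spread (2 * j + 2) 0 (evens z)) = spread (2 * j + 2) (j + 1) (odds z)}

def cographCode (j : ℕ) (g : (ℕ → Bool) → ℕ → Bool) : Set (ℕ → Bool) :=
  {z | g (spread (2 * j + 2) (j + 1) (odds z)) = spread (2 * j + 2) 0 (evens z)}

theorem cmin_eq_zero_of_mem_graphCode (hf : LipWithC (2 ^ (j : ℤ)) f) (hz : z ∈ graphCode j f)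
    (hz' : z' ∈ graphCode j f) (hne : z ≠ z') : cmin z z' = 0 := by
  rw [← interleave_evens_odds z, ← interleave_evens_odds z'] at hne ⊢
  have hu : evens z ≠ evens z' := fun h => by
    have hw : odds z = odds z' :=
      spread_injective (r := 2 * j + 2) (s := j + 1) (by omega) (by rw [← hz, ← hz', h])
    exact hne (by rw [h, hw])
  rw [cmin_eq_zero_iff, even_delta_interleave_iff hne]
  refine ⟨hu, fun i hi => ?_⟩
  have := lipWithC_two_zpow_iff.1 hf _ _ _ (j + 1 + (2 * j + 2) * i)
    (agree_spread (r := 2 * j + 2) (s := 0) agree_delta) (by push_cast; nlinarith)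
  rwa [hz, hz', spread_apply_add_mul (by omega), spread_apply_add_mul (by omega)] at this

theorem cmin_eq_one_of_mem_cographCode (hg : LipWithC (2 ^ (j : ℤ)) g) (hz : z ∈ cographCode j g)
    (hz' : z' ∈ cographCode j g) (hne : z ≠ z') : cmin z z' = 1 := by
  rw [← interleave_evens_odds z, ← interleave_evens_odds z'] at hne ⊢
  have hw : odds z ≠ odds z' := fun h => by
    have hu : evens z = evens z' :=
      spread_injective (r := 2 * j + 2) (s := 0) (by omega) (by rw [← hz, ← hz', h])
    exact hne (by rw [h, hu])
  rw [cmin_eq_one_iff, not_even_delta_interleave_iff hne]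
  refine ⟨hw, fun i hi => ?_⟩
  have := lipWithC_two_zpow_iff.1 hg _ _ _ (0 + (2 * j + 2) * i)
    (agree_spread (r := 2 * j + 2) (s := j + 1) agree_delta) (by push_cast; nlinarith)
  rwa [hz, hz', spread_apply_add_mul (by omega), spread_apply_add_mul (by omega)] at this

theorem hm_cmin_le_covLip {a b : ℝ} (ha : 0 ≤ a) : hm cmin ≤ CovLip a b := by
  refine le_covLip ha fun F G hF hG hcov => ?_
  obtain ⟨j, hj⟩ := pow_unbounded_of_one_lt (max a b) one_lt_two
  have hlt : max a b < 2 ^ ((j : ℤ) + 1) := by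
    rw [zpow_add_one₀ two_ne_zero, zpow_natCast]
    linarith [pow_pos (two_pos (α := ℝ)) j]
  have hhom : ∀ H ∈ graphCode j '' F ∪ cographCode j '' G, IsHomog cmin H := by
    rintro _ (⟨f, hf, rfl⟩ | ⟨g, hg, rfl⟩)
    · exact ⟨0, fun z hz z' hz' => cmin_eq_zero_of_mem_graphCode
        ((hF f hf).two_zpow_of_lt ((le_max_left a b).trans_lt hlt)) hz hz'⟩
    · exact ⟨1, fun z hz z' hz' => cmin_eq_one_of_mem_cographCode
        ((hG g hg).two_zpow_of_lt ((le_max_right a b).trans_lt hlt)) hz hz'⟩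
  have hcover : ⋃₀ (graphCode j '' F ∪ cographCode j '' G) = Set.univ := by
    refine Set.sUnion_eq_univ_iff.2 fun z => ?_
    rcases hcov (spread (2 * j + 2) 0 (evens z)) (spread (2 * j + 2) (j + 1) (odds z)) with
      ⟨f, hf, h⟩ | ⟨g, hg, h⟩
    exacts [⟨_, .inl ⟨f, hf, rfl⟩, h⟩, ⟨_, .inr ⟨g, hg, rfl⟩, h⟩]
  calc hm cmin ≤ #↥(graphCode j '' F ∪ cographCode j '' G) := hm_le hhom hcover
    _ ≤ #↥(graphCode j '' F) + #↥(cographCode j '' G) := mk_union_le _ _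
    _ ≤ #F + #G := add_le_add mk_image_le mk_image_le

end LowerBound

section ContinuumBound

variable {F G : Set ((ℕ → Bool) → ℕ → Bool)}

theorem eq_of_lipWithC_spread {m n : ℕ} {f : (ℕ → Bool) → ℕ → Bool}
    (hf : LipWithC (2 ^ ((m : ℤ) - n - 1)) f) {s t : ℕ → Bool}
    (hs : f (spread 1 m s) = spread 1 n s) (ht : f (spread 1 m t) = spread 1 n t) : s = t := by
  by_contra hst
  have := lipWithC_two_zpow_iff.1 hf _ _ _ (n + 1 * Delta s t)
    (agree_spread (r := 1) (s := m) (agree_delta (x := s) (y := t))) (by push_cast; omega)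
  rw [hs, ht, spread_apply_add_mul one_pos, spread_apply_add_mul one_pos] at this
  exact apply_delta_ne hst this

theorem continuum_le_of_covers (c : ℤ) (hF : ∀ f ∈ F, LipWithC (2 ^ (c - 1)) f)
    (hG : ∀ g ∈ G, LipWithC (2 ^ (-c - 1)) g)
    (hcov : ∀ x y, (∃ f ∈ F, f x = y) ∨ ∃ g ∈ G, g y = x) : 𝔠 ≤ #F + #G := by
  set m := c.toNat
  set n := (-c).toNat
  have hmn : c - 1 = (m : ℤ) - n - 1 := by omega
  have hnm : -c - 1 = (n : ℤ) - m - 1 := by omega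
  have hcovers (t : ℕ → Bool) : ∃ e : F ⊕ G, Sum.elim (fun f => f.1 (spread 1 m t) = spread 1 n t)
      (fun g => g.1 (spread 1 n t) = spread 1 m t) e := by
    rcases hcov (spread 1 m t) (spread 1 n t) with ⟨f, hf, h⟩ | ⟨g, hg, h⟩
    exacts [⟨.inl ⟨f, hf⟩, h⟩, ⟨.inr ⟨g, hg⟩, h⟩]
  choose e he using hcovers
  have he_inj : Function.Injective e := by
    intro s t hst
    have hs := he s
    have ht := he t
    rw [hst] at hs
    generalize e t = et at hs ht
    rcases et with f | g
    · exact eq_of_lipWithC_spread (hmn ▸ hF f.1 f.2) hs ht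
    · exact eq_of_lipWithC_spread (hnm ▸ hG g.1 g.2) hs ht
  calc 𝔠 = #(ℕ → Bool) := mk_cantor.symm
    _ ≤ #(F ⊕ G) := mk_le_of_injective he_inj
    _ = #F + #G := by simp

theorem continuum_le_covLip {a b : ℝ} (ha : 0 < a)
    (hc : ¬∃ c : ℤ, (2 : ℝ) ^ (c - 1) ≤ a ∧ (2 : ℝ) ^ (-c) ≤ b) : 𝔠 ≤ CovLip a b := by
  set c := Int.log 2 a + 1
  have hca : (2 : ℝ) ^ (c - 1) ≤ a := by simpa [c] using Int.zpow_log_le_self one_lt_two ha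
  have hac : a < 2 ^ (c - 1 + 1) := by simpa [c] using Int.lt_zpow_succ_log_self one_lt_two a
  have hbc : b < 2 ^ (-c - 1 + 1) := by simpa using fun h => hc ⟨c, hca, h⟩
  exact le_covLip ha.le fun F G hF hG hcov => continuum_le_of_covers c
    (fun f hf => (hF f hf).two_zpow_of_lt hac) (fun g hg => (hG g hg).two_zpow_of_lt hbc) hcov

end ContinuumBound

end Cantor

theorem stmt14_general (a b : ℝ) (ha : 0 < a) :
    ((∃ c : ℤ, (2 : ℝ) ^ (c - 1) ≤ a ∧ (2 : ℝ) ^ (-c) ≤ b) →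
      CovLip a b = hm cmin) ∧
    (¬(∃ c : ℤ, (2 : ℝ) ^ (c - 1) ≤ a ∧ (2 : ℝ) ^ (-c) ≤ b) →
      CovLip a b = Cardinal.continuum) :=
  ⟨fun ⟨c, hca, hcb⟩ =>
    (Cantor.covLip_le_hm_cmin c hca hcb).antisymm (Cantor.hm_cmin_le_covLip ha.le),
  fun hc => (Cantor.covLip_le_continuum ha.le).antisymm (Cantor.continuum_le_covLip ha hc)⟩

/-- If there is `c ∈ ℤ` with `2 ^ (c - 1) ≤ a` and `2 ^ (-c) ≤ b`, then
`Cov(Lip_{a,b}) = hm(c_min)`; otherwise `Cov(Lip_{a,b}) = 2 ^ ℵ₀`. -/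
theorem stmt14 (a b : ℝ) (ha : 0 < a) (hb : 0 < b) :
    ((∃ c : ℤ, (2 : ℝ) ^ (c - 1) ≤ a ∧ (2 : ℝ) ^ (-c) ≤ b) →
      CovLip a b = hm cmin) ∧
    (¬(∃ c : ℤ, (2 : ℝ) ^ (c - 1) ≤ a ∧ (2 : ℝ) ^ (-c) ≤ b) →
      CovLip a b = Cardinal.continuum) :=
  stmt14_general a b ha
end

section
/- hm(c_min) equals the least cardinality of a family F of Lipschitz functions from 2^ℕ to 2^ℕ (each Lipschitz with some constant) such that for every (x,y) ∈ 2^ℕ × 2^ℕ there is f ∈ F with f(x) = y or f(y) = x. -/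
open Cardinal Topology

/-!
Write a point of the Cantor space as the interleaving of its even track and its odd track.
If `H` is homogeneous of colour `i`, two points of `H` first differ on track `i`, so on `H` the
track of parity `i` determines the other one through a map that respects cylinders; extended to
the whole space it is `1`-Lipschitz, and it covers `(x, y)` whenever the interleaving of `x` and
`y` lies in `H`.

Conversely, let `F` cover all pairs. Spread each `w` out to `spread w`, placing bit `j` at
position `2j² + j`. If `w ≠ w'`, the spread sequences first differ on the track with the parity
of `firstDiff w w'`, and the other track changes only much later. A map that is Lipschitz with
constant `2ᵏ` and sends one track to the other cannot make the first difference come that much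
earlier, so for each `f ∈ F`, direction of `f`, and prefix of length `k + 1`, the corresponding
piece is homogeneous. `F` is infinite by counting, so there are only `#F` pieces.
-/

open PiNat Function

universe u

theorem Delta_eq_firstDiff {α : Type*} (x y : ℕ → α) : Delta x y = firstDiff x y := by
  by_cases hxy : x = y
  · subst hxy
    rw [firstDiff_def, dif_neg (not_not.2 rfl), Delta]
    simp
  · refine le_antisymm (Nat.sInf_le (apply_firstDiff_ne hxy)) (not_lt.1 fun h => ?_)
    exact Nat.sInf_mem (Function.ne_iff.1 hxy) (apply_eq_of_lt_firstDiff h)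

theorem cmin_val (x y : ℕ → Bool) : (cmin x y).val = firstDiff x y % 2 := by
  rw [cmin, ← Delta_eq_firstDiff]
  split_ifs with h
  · exact (Nat.even_iff.1 h).symm
  · exact (Nat.odd_iff.1 (Nat.not_even_iff_odd.1 h)).symm

theorem distC_self (x : ℕ → Bool) : distC x x = 0 := by
  simp [distC]

theorem distC_of_ne {x y : ℕ → Bool} (h : x ≠ y) :
    distC x y = (2 : ℝ) ^ (-(firstDiff x y : ℤ)) := by
  simp [distC, h, Delta_eq_firstDiff]

theorem distC_nonneg (x y : ℕ → Bool) : 0 ≤ distC x y := by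
  rcases eq_or_ne x y with rfl | h
  · rw [distC_self]
  · rw [distC_of_ne h]
    positivity

theorem LipWithC.mono_s15 {a b : ℝ} {f : (ℕ → Bool) → (ℕ → Bool)} (hf : LipWithC a f) (hab : a ≤ b) :
    LipWithC b f := fun x y =>
  (hf x y).trans (mul_le_mul_of_nonneg_right hab (distC_nonneg x y))

theorem lipWithC_two_pow_iff {f : (ℕ → Bool) → (ℕ → Bool)} (k : ℕ) :
    LipWithC (2 ^ k) f ↔ ∀ x y, f x ≠ f y → firstDiff x y ≤ firstDiff (f x) (f y) + k := by
  have key : ∀ x y, f x ≠ f y → (distC (f x) (f y) ≤ 2 ^ k * distC x y ↔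
      firstDiff x y ≤ firstDiff (f x) (f y) + k) := by
    intro x y hf
    have hxy : x ≠ y := fun h => hf (congrArg f h)
    rw [distC_of_ne hf, distC_of_ne hxy, ← zpow_natCast, ← zpow_add₀ two_ne_zero,
      zpow_le_zpow_iff_right₀ (one_lt_two (α := ℝ))]
    omega
  refine ⟨fun h x y hf => (key x y hf).1 (h x y), fun h x y => ?_⟩
  rcases eq_or_ne (f x) (f y) with hf | hf
  · rw [hf, distC_self]
    exact mul_nonneg (by positivity) (distC_nonneg x y)
  · exact (key x y hf).2 (h x y hf)

def CylinderLipschitz {α β : Type*} (k : ℕ) (f : (ℕ → α) → (ℕ → β)) : Prop :=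
  ∀ x y n, y ∈ cylinder x (n + k) → f y ∈ cylinder (f x) n

theorem cylinderLipschitz_iff {α β : Type*} {f : (ℕ → α) → (ℕ → β)} (k : ℕ) :
    CylinderLipschitz k f ↔ ∀ x y, f x ≠ f y → firstDiff x y ≤ firstDiff (f x) (f y) + k := by
  constructor
  · intro hf x y hfxy
    by_contra! hlt
    have hy : y ∈ cylinder x (firstDiff (f x) (f y) + 1 + k) := fun i hi =>
      (apply_eq_of_lt_firstDiff (by omega)).symm
    exact apply_firstDiff_ne hfxy (hf x y _ hy _ (Nat.lt_succ_self _)).symm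
  · intro hf x y n hy i hi
    rcases eq_or_ne (f x) (f y) with hfxy | hfxy
    · rw [hfxy]
    have hxy : y ≠ x := fun h => hfxy (by rw [h])
    have := (mem_cylinder_iff_le_firstDiff hxy _).1 hy
    rw [firstDiff_comm] at this
    exact (apply_eq_of_lt_firstDiff (by have := hf x y hfxy; omega)).symm

theorem LipWithC.exists_cylinderLipschitz {a : ℝ} {f : (ℕ → Bool) → (ℕ → Bool)}
    (hf : LipWithC a f) : ∃ k, CylinderLipschitz k f := by
  obtain ⟨k, hk⟩ := pow_unbounded_of_one_lt a (one_lt_two (α := ℝ))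
  exact ⟨k, (cylinderLipschitz_iff k).2 ((lipWithC_two_pow_iff k).1 (hf.mono_s15 hk.le))⟩

theorem CylinderLipschitz.lipWithC_one {f : (ℕ → Bool) → (ℕ → Bool)}
    (hf : CylinderLipschitz 0 f) : LipWithC 1 f := by
  simpa using (lipWithC_two_pow_iff 0).2 ((cylinderLipschitz_iff 0).1 hf)

def track {α : Type*} (i : Fin 2) (z : ℕ → α) : ℕ → α := fun n => z (2 * n + i)

def interleave {α : Type*} (x y : ℕ → α) : ℕ → α :=
  fun n => if n % 2 = 0 then x (n / 2) else y (n / 2)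

theorem track_zero_interleave {α : Type*} (x y : ℕ → α) : track 0 (interleave x y) = x := by
  funext n
  simp [track, interleave]

theorem track_one_interleave {α : Type*} (x y : ℕ → α) : track 1 (interleave x y) = y := by
  funext n
  simp [track, interleave, Nat.add_mod, Nat.add_div]

theorem exists_cylinderLipschitz_zero_extension {ι α β : Type*} [Inhabited β] (H : Set ι)
    (p : ι → ℕ → α) (q : ι → ℕ → β)
    (h : ∀ z ∈ H, ∀ z' ∈ H, ∀ n, p z' ∈ cylinder (p z) n → q z' ∈ cylinder (q z) n) :
    ∃ f : (ℕ → α) → (ℕ → β), CylinderLipschitz 0 f ∧ ∀ z ∈ H, f (p z) = q z := by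
  classical
  refine ⟨fun x n => if hx : ∃ z ∈ H, cylinder x (n + 1) = cylinder (p z) (n + 1)
    then q hx.choose n else default, fun x y n hy i hi => ?_, fun z hz => funext fun n => ?_⟩
  · have hxy : cylinder y (i + 1) = cylinder x (i + 1) :=
      mem_cylinder_iff_eq.1 (cylinder_anti x (by omega) hy)
    simp only [hxy]
  · have hex : ∃ z' ∈ H, cylinder (p z) (n + 1) = cylinder (p z') (n + 1) := ⟨z, hz, rfl⟩
    simp only [dif_pos hex]
    obtain ⟨hz', hzz'⟩ := hex.choose_spec
    exact (h _ hz' z hz (n + 1) (mem_cylinder_iff_eq.2 hzz') n (Nat.lt_succ_self n)).symm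

theorem track_rev_mem_cylinder {α : Type*} {z z' : ℕ → α} {i : Fin 2}
    (hpar : z ≠ z' → firstDiff z z' % 2 = i) {n : ℕ}
    (hn : track i z' ∈ cylinder (track i z) n) : track i.rev z' ∈ cylinder (track i.rev z) n := by
  intro m hm
  by_contra hne
  have hzz' : z ≠ z' := by rintro rfl; exact hne rfl
  have hδ : firstDiff z z' ≤ 2 * m + i.rev := by
    by_contra! hlt
    exact hne (apply_eq_of_lt_firstDiff hlt).symm
  have hδ' := hpar hzz'
  have hi := i.isLt
  rw [Fin.val_rev] at hδ
  have hj : firstDiff z z' = 2 * (firstDiff z z' / 2) + i := by omega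
  refine apply_firstDiff_ne hzz' ?_
  rw [hj]
  exact (hn (firstDiff z z' / 2) (by omega)).symm

theorem exists_lipWithC_one_track_eq_of_isHomog {H : Set (ℕ → Bool)} (hH : IsHomog cmin H) :
    ∃ i : Fin 2, ∃ f, LipWithC 1 f ∧ ∀ z ∈ H, f (track i z) = track i.rev z := by
  obtain ⟨i, hi⟩ := hH
  obtain ⟨f, hf, hfH⟩ := exists_cylinderLipschitz_zero_extension H (track i) (track i.rev)
    fun z hz z' hz' _ => track_rev_mem_cylinder fun hne => by rw [← cmin_val, hi z hz z' hz' hne]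
  exact ⟨i, f, hf.lipWithC_one, hfH⟩

def CoversPairs {X : Type*} (F : Set (X → X)) : Prop :=
  ∀ x y, ∃ f ∈ F, f x = y ∨ f y = x

theorem exists_lipschitz_coversPairs {𝓗 : Set (Set (ℕ → Bool))}
    (hhom : ∀ H ∈ 𝓗, IsHomog cmin H) (hcov : ⋃₀ 𝓗 = Set.univ) :
    ∃ F : Set ((ℕ → Bool) → (ℕ → Bool)),
      #F ≤ #𝓗 ∧ (∀ f ∈ F, ∃ a, LipWithC a f) ∧ CoversPairs F := by
  choose i f hf hfH using fun H : 𝓗 => exists_lipWithC_one_track_eq_of_isHomog (hhom H H.2)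
  refine ⟨Set.range f, mk_range_le, Set.forall_mem_range.2 fun H => ⟨1, hf H⟩, fun x y => ?_⟩
  obtain ⟨H, hH, hxy⟩ := Set.mem_sUnion.1 (hcov ▸ Set.mem_univ (interleave x y))
  refine ⟨f ⟨H, hH⟩, ⟨_, rfl⟩, ?_⟩
  have := hfH ⟨H, hH⟩ _ hxy
  generalize i ⟨H, hH⟩ = j at this
  fin_cases j
  · left
    simpa [track_zero_interleave, track_one_interleave] using this
  · right
    simpa [track_zero_interleave, track_one_interleave] using this

-- Each `f` covers at most `2 |S|` of the `|S|²` pairs from a finite set `S`.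
theorem CoversPairs.infinite {X : Type*} [Infinite X] {F : Set (X → X)} (hF : CoversPairs F) :
    F.Infinite := by
  classical
  intro hfin
  set T := hfin.toFinset
  obtain ⟨S, hS⟩ := Infinite.exists_subset_card_eq X (2 * T.card + 1)
  have hsub : S ×ˢ S ⊆ T.biUnion fun f =>
      S.image (fun x => (x, f x)) ∪ S.image (fun y => (f y, y)) := by
    rintro ⟨x, y⟩ hxy
    rw [Finset.mem_product] at hxy
    obtain ⟨f, hf, h⟩ := hF x y
    simp only [Finset.mem_biUnion, Finset.mem_union, Finset.mem_image]
    refine ⟨f, hfin.mem_toFinset.2 hf, ?_⟩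
    rcases h with rfl | rfl
    · exact Or.inl ⟨x, hxy.1, rfl⟩
    · exact Or.inr ⟨y, hxy.2, rfl⟩
  have hcard := (Finset.card_le_card hsub).trans <| Finset.card_biUnion_le.trans <|
    Finset.sum_le_sum fun f _ => (Finset.card_union_le _ _).trans
      (add_le_add Finset.card_image_le Finset.card_image_le)
  rw [Finset.card_product, Finset.sum_const, smul_eq_mul, hS] at hcard
  nlinarith

theorem hm_le_mk_of_iUnion_eq_univ {X ι : Type u} {c : X → X → Fin 2} (P : ι → Set X)
    (hP : ∀ i, IsHomog c (P i)) (hcov : ⋃ i, P i = Set.univ) : hm c ≤ #ι := by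
  refine (csInf_le' ?_).trans (mk_range_le (f := P))
  exact ⟨Set.range P, rfl, Set.forall_mem_range.2 hP, by rwa [Set.sUnion_range]⟩

def sparsePos (j : ℕ) : ℕ := 2 * j ^ 2 + j

theorem sparsePos_succ (j : ℕ) : sparsePos (j + 1) = sparsePos j + 4 * j + 3 := by
  unfold sparsePos
  ring

theorem sparsePos_mod_two (j : ℕ) : sparsePos j % 2 = j % 2 := by
  unfold sparsePos
  omega

theorem sparsePos_strictMono : StrictMono sparsePos :=
  strictMono_nat_of_lt_succ fun j => by rw [sparsePos_succ]; omega

noncomputable def spread {α : Type*} [Inhabited α] (w : ℕ → α) : ℕ → α :=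
  extend sparsePos w default

theorem spread_sparsePos {α : Type*} [Inhabited α] (w : ℕ → α) (j : ℕ) :
    spread w (sparsePos j) = w j :=
  sparsePos_strictMono.injective.extend_apply _ _ _

theorem spread_apply_eq {α : Type*} [Inhabited α] {w w' : ℕ → α} {n : ℕ}
    (hn : n < sparsePos (firstDiff w w' + 1)) (hn' : n ≠ sparsePos (firstDiff w w')) :
    spread w n = spread w' n := by
  by_cases hj : ∃ j, sparsePos j = n
  · obtain ⟨j, rfl⟩ := hj
    rw [spread_sparsePos, spread_sparsePos]
    have := sparsePos_strictMono.lt_iff_lt.1 hn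
    exact apply_eq_of_lt_firstDiff (lt_of_le_of_ne (by omega) fun h => hn' (by rw [h]))
  · simp only [spread, extend_apply' _ _ _ hj]

theorem firstDiff_mod_two_eq_of_track_eq {α : Type*} [Inhabited α] {f : (ℕ → α) → (ℕ → α)}
    {k : ℕ} (hf : CylinderLipschitz k f) {i : Fin 2} {w w' : ℕ → α}
    (hw : f (track i (spread w)) = track i.rev (spread w))
    (hw' : f (track i (spread w')) = track i.rev (spread w'))
    (hpre : w' ∈ cylinder w (k + 1)) (hne : w ≠ w') : firstDiff w w' % 2 = i := by
  have hkδ : k + 1 ≤ firstDiff w w' := by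
    rw [firstDiff_comm]
    exact (mem_cylinder_iff_le_firstDiff hne.symm _).1 hpre
  set δ := firstDiff w w'
  by_contra hpar
  have hi := i.isLt
  have hpos := sparsePos_mod_two δ
  set q := sparsePos δ / 2
  have hq : sparsePos δ = 2 * q + i.rev := by rw [Fin.val_rev]; omega
  -- The first difference of the spread sequences lies on track `i.rev`, at index `q` ...
  have hrev : f (track i (spread w')) ∉ cylinder (f (track i (spread w))) (q + 1) := by
    rw [hw, hw']
    intro h
    refine apply_firstDiff_ne hne ?_
    rw [← spread_sparsePos w, ← spread_sparsePos w', hq]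
    exact (h q (Nat.lt_succ_self q)).symm
  -- ... while track `i` only changes at the next sparse position, too late for `f`.
  obtain ⟨m, hm, hdiff⟩ : ∃ m < q + 1 + k, track i (spread w') m ≠ track i (spread w) m := by
    simpa [cylinder] using fun h => hrev (hf _ _ _ h)
  have hlate : sparsePos (δ + 1) ≤ 2 * m + i := by
    by_contra! hlt
    refine hdiff (spread_apply_eq hlt ?_).symm
    rw [hq, Fin.val_rev]
    omega
  rw [sparsePos_succ] at hlate
  omega

theorem hm_cmin_le_mk {F : Set ((ℕ → Bool) → (ℕ → Bool))} (hLip : ∀ f ∈ F, ∃ a, LipWithC a f)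
    (hF : CoversPairs F) : hm cmin ≤ #F := by
  have : ∀ f : F, ∃ k, CylinderLipschitz k f.1 := fun f =>
    (hLip f f.2).elim fun _ ha => ha.exists_cylinderLipschitz
  choose K hK using this
  have : Infinite F := hF.infinite.to_subtype
  refine (hm_le_mk_of_iUnion_eq_univ (ι := F × Fin 2 × List Bool) (fun p =>
    {w | res w (K p.1 + 1) = p.2.2 ∧ p.1.1 (track p.2.1 (spread w)) = track p.2.1.rev (spread w)})
    ?_ ?_).trans ?_
  · rintro ⟨f, i, l⟩
    refine ⟨i, fun w ⟨hwl, hw⟩ w' ⟨hw'l, hw'⟩ hne => Fin.ext ?_⟩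
    rw [cmin_val]
    refine firstDiff_mod_two_eq_of_track_eq (hK f) hw hw' ?_ hne
    rw [cylinder_eq_res]
    exact hw'l.trans hwl.symm
  · refine Set.eq_univ_of_forall fun w => Set.mem_iUnion.2 ?_
    obtain ⟨f, hf, h | h⟩ := hF (track 0 (spread w)) (track 1 (spread w))
    · exact ⟨(⟨f, hf⟩, 0, res w (K ⟨f, hf⟩ + 1)), rfl, h⟩
    · exact ⟨(⟨f, hf⟩, 1, res w (K ⟨f, hf⟩ + 1)), rfl, h⟩
  · rw [mk_prod, lift_id, lift_id]
    exact (mul_eq_left (aleph0_le_mk _) (mk_le_aleph0.trans (aleph0_le_mk _)) (mk_ne_zero _)).le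

/-- `hm(c_min)` equals the least cardinality of a family `F` of Lipschitz functions
(each with some constant) from the Cantor space to itself such that every pair
`(x, y)` is covered by some `f ∈ F`. -/
theorem stmt15 :
    hm cmin = sInf {μ : Cardinal | ∃ F : Set ((ℕ → Bool) → (ℕ → Bool)),
      #F = μ ∧ (∀ f ∈ F, ∃ a : ℝ, LipWithC a f) ∧
      ∀ x y : ℕ → Bool, ∃ f ∈ F, f x = y ∨ f y = x} := by
  have hconst : ∀ f ∈ Set.range fun c : ℕ → Bool => fun _ : ℕ → Bool => c, ∃ a, LipWithC a f := by
    rintro _ ⟨c, rfl⟩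
    exact ⟨1, CylinderLipschitz.lipWithC_one fun _ _ n _ => self_mem_cylinder c n⟩
  have hsingle : ∀ H ∈ Set.range fun x : ℕ → Bool => ({x} : Set (ℕ → Bool)), IsHomog cmin H := by
    rintro _ ⟨x, rfl⟩
    exact ⟨0, fun a ha b hb hab => absurd (ha.trans hb.symm) hab⟩
  apply le_antisymm
  · refine le_csInf ⟨_, _, rfl, hconst, fun x y => ⟨fun _ => y, ⟨y, rfl⟩, Or.inl rfl⟩⟩ ?_
    rintro _ ⟨F, rfl, hLip, hF⟩
    exact hm_cmin_le_mk hLip hF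
  · refine le_csInf ⟨_, _, rfl, hsingle, Set.eq_univ_of_forall fun x => ⟨{x}, ⟨x, rfl⟩, rfl⟩⟩ ?_
    rintro _ ⟨𝓗, rfl, hhom, hcov⟩
    obtain ⟨F, hF𝓗, hLip, hF⟩ := exists_lipschitz_coversPairs hhom hcov
    refine le_trans (csInf_le' ?_) hF𝓗
    exact ⟨F, rfl, hLip, hF⟩
end

section
/- Cov(Cont(2^ℕ)) ≥ 𝔡, i.e., the least cardinality of a family F of continuous functions from 2^ℕ to 2^ℕ such that for every (x,y) ∈ 2^ℕ × 2^ℕ there is f ∈ F with f(x) = y or f(y) = x, is at least the dominating number 𝔡. -/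
open Cardinal Topology

/-- `Cov(Cont(X))`: the least cardinality of a family of continuous self-maps of `X`
such that every pair `(x, y) ∈ X × X` is covered (i.e., `f x = y` or `f y = x` for some
member `f`). -/
noncomputable def CovCont (X : Type*) [TopologicalSpace X] : Cardinal :=
  sInf {μ | ∃ F : Set (X → X), #F = μ ∧ (∀ f ∈ F, Continuous f) ∧
    ∀ x y : X, ∃ f ∈ F, f x = y ∨ f y = x}

/-- The dominating number `𝔡`. -/
noncomputable def domNumber : Cardinal :=
  sInf {μ | ∃ D : Set (ℕ → ℕ), #D = μ ∧
    ∀ g : ℕ → ℕ, ∃ f ∈ D, ∀ᶠ n in Filter.atTop, g n ≤ f n}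

namespace Stmt17Aux


def Efun (g : ℕ → ℕ) (n : ℕ) : ℕ := (∑ i ∈ Finset.range (n+1), g i) + n

lemma Efun_strictMono (g : ℕ → ℕ) : StrictMono (Efun g) := by
  apply strictMono_nat_of_lt_succ
  intro n
  simp only [Efun, Finset.sum_range_succ]
  omega

lemma le_Efun (g : ℕ → ℕ) (n : ℕ) : g n ≤ Efun g n := by
  have : g n ≤ ∑ i ∈ Finset.range (n+1), g i :=
    Finset.single_le_sum (fun i _ => Nat.zero_le (g i)) (Finset.self_mem_range_succ n)
  simp only [Efun]; omega

lemma self_le_Efun (g : ℕ → ℕ) (n : ℕ) : n ≤ Efun g n := Nat.le_add_left n _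

open Classical in
noncomputable def xh (g : ℕ → ℕ) : ℕ → Bool :=
  fun k => if ∃ n, Efun g n = k then true else false

lemma xh_true_iff (g : ℕ → ℕ) (k : ℕ) : xh g k = true ↔ ∃ n, Efun g n = k := by
  classical
  simp only [xh]
  split <;> simp_all

lemma xh_infinite (g : ℕ → ℕ) : {k | xh g k = true}.Infinite := by
  have h : Set.range (Efun g) ⊆ {k | xh g k = true} := by
    rintro k ⟨n, rfl⟩
    exact (xh_true_iff g _).2 ⟨n, rfl⟩
  exact (Set.infinite_range_of_injective (Efun_strictMono g).injective).mono h

lemma Efun_lt_of_card (g : ℕ → ℕ) (n b : ℕ)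
    (h : n + 1 ≤ ((Finset.range b).filter (fun k => xh g k = true)).card) :
    Efun g n < b := by
  by_contra hb
  push_neg at hb
  have hsub : (Finset.range b).filter (fun k => xh g k = true) ⊆
      (Finset.range n).image (Efun g) := by
    intro k hk
    rcases Finset.mem_filter.1 hk with ⟨hkb, hkt⟩
    rcases (xh_true_iff g k).1 hkt with ⟨m, rfl⟩
    have hkb' := Finset.mem_range.1 hkb
    have hmn : m < n := by
      by_contra hmn
      push_neg at hmn
      exact absurd ((Efun_strictMono g).le_iff_le.2 hmn) (by omega)
    exact Finset.mem_image.2 ⟨m, Finset.mem_range.2 hmn, rfl⟩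
  have := (Finset.card_le_card hsub).trans (Finset.card_image_le)
  simp only [Finset.card_range] at this
  omega

lemma exists_bound (f : (ℕ → Bool) → (ℕ → Bool)) (hf : Continuous f) (y : ℕ → Bool)
    (hy : ∀ x, f x = y → {k | x k = true}.Infinite) (n : ℕ) :
    ∃ b, ∀ x, f x = y → n + 1 ≤ ((Finset.range b).filter (fun k => x k = true)).card := by
  have hK : IsCompact (f ⁻¹' {y}) := (isClosed_singleton.preimage hf).isCompact
  set U : ℕ → Set (ℕ → Bool) :=
    fun b => {x | n + 1 ≤ ((Finset.range b).filter (fun k => x k = true)).card} with hU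
  have hUopen : ∀ b, IsOpen (U b) := by
    intro b
    have hc : Continuous
        (fun x : ℕ → Bool => ((Finset.range b).filter (fun k => x k = true)).card) := by
      have he : (fun x : ℕ → Bool => ((Finset.range b).filter (fun k => x k = true)).card)
          = fun x => ∑ k ∈ Finset.range b, (if x k = true then 1 else 0) := by
        funext x; rw [Finset.card_filter]
      rw [he]
      refine continuous_finset_sum _ (fun k _ => ?_)
      have hb : Continuous (fun v : Bool => (if v = true then 1 else 0 : ℕ)) :=
        continuous_of_discreteTopology
      exact hb.comp (continuous_apply k)
    exact IsOpen.preimage hc (isOpen_discrete {m : ℕ | n + 1 ≤ m})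
  have hcover : f ⁻¹' {y} ⊆ ⋃ b, U b := by
    intro x hx
    have hinf := hy x (by simpa using hx)
    obtain ⟨t, hts, htc⟩ := hinf.exists_subset_card_eq (n + 1)
    refine Set.mem_iUnion.2 ⟨t.sup id + 1, ?_⟩
    have hsub : t ⊆ (Finset.range (t.sup id + 1)).filter (fun k => x k = true) := by
      intro k hk
      refine Finset.mem_filter.2 ⟨Finset.mem_range.2 ?_, hts hk⟩
      have := Finset.le_sup (f := id) hk
      simp only [id] at this; omega
    have := Finset.card_le_card hsub
    simp only [hU, Set.mem_setOf_eq]; omega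
  obtain ⟨t, ht⟩ := hK.elim_finite_subcover U hUopen hcover
  refine ⟨t.sup id + 1, fun x hx => ?_⟩
  have hxm := ht (show x ∈ f ⁻¹' {y} by simp [hx])
  rcases Set.mem_iUnion₂.1 hxm with ⟨b, hbt, hxb⟩
  have hble : b ≤ t.sup id + 1 := by
    have := Finset.le_sup (f := id) hbt; simp only [id] at this; omega
  have hsub : (Finset.range b).filter (fun k => x k = true) ⊆
      (Finset.range (t.sup id + 1)).filter (fun k => x k = true) :=
    Finset.filter_subset_filter _ (Finset.range_subset_range.2 hble)
  have hcard := Finset.card_le_card hsub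
  have hxb' : n + 1 ≤ ((Finset.range b).filter (fun k => x k = true)).card := hxb
  omega

lemma D0_countable : ({x : ℕ → Bool | {k | x k = true}.Finite}).Countable := by
  classical
  have hsub : {x : ℕ → Bool | {k | x k = true}.Finite} ⊆
      ⋃ s : Finset ℕ, {x : ℕ → Bool | ∀ k, x k = true ↔ k ∈ s} := by
    intro x hx
    exact Set.mem_iUnion.2 ⟨hx.toFinset, fun k => by simp [Set.Finite.mem_toFinset]⟩
  refine Set.Countable.mono hsub ?_
  refine Set.countable_iUnion (fun s => ?_)
  apply Set.Subsingleton.countable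
  intro a ha b hb
  funext k
  have h1 := ha k
  have h2 := hb k
  cases hak : a k <;> cases hbk : b k <;> simp_all

end Stmt17Aux

open Stmt17Aux

/-- `Cov(Cont(2^ℕ)) ≥ 𝔡`. -/
theorem stmt17 : domNumber ≤ CovCont (ℕ → Bool) := by
  classical
  unfold CovCont
  refine le_csInf ?_ ?_
  · exact ⟨_, {f : (ℕ → Bool) → (ℕ → Bool) | Continuous f}, rfl, fun f hf => hf,
      fun x y => ⟨fun _ => y, continuous_const, Or.inl rfl⟩⟩
  · rintro μ ⟨F, rfl, hFcont, hFcov⟩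
    by_cases hsmall : #F < #(ℕ → Bool)
    · set D₀ : Set (ℕ → Bool) := {x | {k | x k = true}.Finite} with hD₀
      set bad : Set (ℕ → Bool) := ⋃ f ∈ F, f '' D₀ with hbad
      have hbadlt : #bad < #(ℕ → Bool) := by
        have h1 : #bad ≤ #F * ℵ₀ := by
          rw [hbad, Set.biUnion_eq_iUnion]
          refine (Cardinal.mk_iUnion_le _).trans ?_
          refine mul_le_mul_right ?_ _
          refine ciSup_le' (fun i => ?_)
          exact (D0_countable.image _).le_aleph0
        have h2 : ℵ₀ < #(ℕ → Bool) := by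
          have : #(ℕ → Bool) = 2 ^ ℵ₀ := by
            rw [← Cardinal.power_def Bool ℕ, Cardinal.mk_bool, Cardinal.mk_nat]
          rw [this]
          exact Cardinal.cantor ℵ₀
        exact h1.trans_lt (Cardinal.mul_lt_of_lt h2.le hsmall h2)
      obtain ⟨y, hy⟩ : ∃ y, y ∉ bad := by
        by_contra h
        push_neg at h
        have : bad = Set.univ := Set.eq_univ_of_forall h
        rw [this, Cardinal.mk_univ] at hbadlt
        exact lt_irrefl _ hbadlt
      have key : ∀ f ∈ F, ∀ x, f x = y → {k | x k = true}.Infinite := by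
        intro f hf x hfx
        by_contra h
        rw [Set.not_infinite] at h
        exact hy (Set.mem_biUnion hf ⟨x, h, hfx⟩)
      have hbd : ∀ f : (ℕ → Bool) → (ℕ → Bool), ∃ d : ℕ → ℕ,
          f ∈ F → ∀ g : ℕ → ℕ, (f (xh g) = y ∨ f y = xh g) → ∀ n, g n ≤ d n := by
        intro f
        by_cases hfF : f ∈ F
        · have hb : ∀ n, ∃ b, ∀ x, f x = y →
              n + 1 ≤ ((Finset.range b).filter (fun k => x k = true)).card :=
            fun n => exists_bound f (hFcont f hfF) y (key f hfF) n
          choose β hβ using hb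
          refine ⟨fun n => max (β n)
            (sInf {b | n + 1 ≤ ((Finset.range b).filter (fun k => f y k = true)).card}),
            fun _ g hcase n => ?_⟩
          rcases hcase with hxy | hyx
          · have h1 := hβ n (xh g) hxy
            have h2 := Efun_lt_of_card g n (β n) h1
            have h3 := le_Efun g n
            exact le_trans (by omega) (le_max_left _ _)
          · rw [hyx]
            have hne : {b | n + 1 ≤
                ((Finset.range b).filter (fun k => xh g k = true)).card}.Nonempty := by
              obtain ⟨t, hts, htc⟩ := (xh_infinite g).exists_subset_card_eq (n + 1)
              refine ⟨t.sup id + 1, ?_⟩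
              rw [Set.mem_setOf_eq]
              have hsub : t ⊆ (Finset.range (t.sup id + 1)).filter
                  (fun k => xh g k = true) := by
                intro k hk
                refine Finset.mem_filter.2 ⟨Finset.mem_range.2 ?_, hts hk⟩
                have := Finset.le_sup (f := id) hk
                simp only [id] at this; omega
              have := Finset.card_le_card hsub
              omega
            have hmem := Nat.sInf_mem hne
            rw [Set.mem_setOf_eq] at hmem
            have h2 := Efun_lt_of_card g n _ hmem
            have h3 := le_Efun g n
            exact le_trans (by omega) (le_max_right _ _)
        · exact ⟨fun _ => 0, fun h => absurd h hfF⟩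
      choose d hd using hbd
      have hdom : ∀ g : ℕ → ℕ, ∃ df ∈ d '' F, ∀ᶠ n in Filter.atTop, g n ≤ df n := by
        intro g
        obtain ⟨f, hfF, hcov⟩ := hFcov (xh g) y
        exact ⟨d f, Set.mem_image_of_mem d hfF,
          Filter.Eventually.of_forall (hd f hfF g hcov)⟩
      have hD : domNumber ≤ #(d '' F) := by
        unfold domNumber
        exact csInf_le (OrderBot.bddBelow _) ⟨d '' F, rfl, hdom⟩
      exact hD.trans (Cardinal.mk_image_le)
    · have h1 : domNumber ≤ #(Set.univ : Set (ℕ → ℕ)) := by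
        unfold domNumber
        exact csInf_le (OrderBot.bddBelow _)
          ⟨Set.univ, rfl, fun g => ⟨g, Set.mem_univ g,
            Filter.Eventually.of_forall (fun n => le_rfl)⟩⟩
      have h3 : #(ℕ → ℕ) ≤ #(ℕ → Bool) := by
        refine Cardinal.mk_le_of_injective
          (f := fun (g : ℕ → ℕ) (k : ℕ) => decide (g k.unpair.1 = k.unpair.2)) ?_
        intro g g' h
        funext n
        have := congrFun h (Nat.pair n (g n))
        simp [Nat.unpair_pair] at this
        exact this.symm
      rw [Cardinal.mk_univ] at h1
      exact h1.trans (h3.trans (le_of_not_gt hsmall))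
end

section
/- Let X be a Polish space, c a continuous pair-coloring on X, and A ⊆ X an analytic set. If A cannot be covered by countably many c-homogeneous sets, then c_min ≤ c restricted to A; that is, there is a topological embedding e : 2^ℕ → X with range contained in A such that c(e(x),e(y)) = c_min(x,y) for all distinct x,y ∈ 2^ℕ. -/
open Cardinal Topology

/-! Write `A = g '' univ` with `g : ℕ^ℕ → X` continuous, and call a set `σ`-homogeneous if
countably many homogeneous sets cover it. Since `ℕ^ℕ` is hereditarily Lindelöf, the points all
of whose neighbourhoods have a non-`σ`-homogeneous image carry all of `A` up to a
`σ`-homogeneous set. So an open `W` whose image is not `σ`-homogeneous contains two such points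
`u`, `v` with `g u ≠ g v` and `c (g u) (g v)` any prescribed color; continuity of `c` and `g`
then yields small open `W₀ ∋ u`, `W₁ ∋ v` inside `W`, again with non-`σ`-homogeneous images,
such that `c` takes that color on all of `g '' W₀ × g '' W₁`. Splitting with the parity of the
depth as color builds a Cantor scheme in `ℕ^ℕ` with vanishing diameters for a complete metric;
`g` composed with its induced map is the embedding. -/

open Set Filter PiNat CantorScheme
open scoped ENNReal

section SigmaHomog

variable {X : Type*} {c : X → X → Fin 2}

variable (c) in
def SigmaHomog (S : Set X) : Prop :=
  ∃ F : Set (Set X), F.Countable ∧ (∀ H ∈ F, IsHomog c H) ∧ S ⊆ ⋃₀ F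

theorem SigmaHomog.mono {S T : Set X} (hT : SigmaHomog c T) (hST : S ⊆ T) : SigmaHomog c S :=
  let ⟨F, hF, hhom, hcov⟩ := hT
  ⟨F, hF, hhom, hST.trans hcov⟩

theorem SigmaHomog.iUnion {ι : Sort*} [Countable ι] {S : ι → Set X}
    (h : ∀ i, SigmaHomog c (S i)) : SigmaHomog c (⋃ i, S i) := by
  choose F hF hhom hcov using h
  refine ⟨⋃ i, F i, countable_iUnion hF, ?_, ?_⟩
  · simp only [mem_iUnion]
    rintro H ⟨i, hH⟩
    exact hhom i H hH
  · rw [sUnion_iUnion]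
    exact iUnion_mono hcov

theorem SigmaHomog.union {S T : Set X} (hS : SigmaHomog c S) (hT : SigmaHomog c T) :
    SigmaHomog c (S ∪ T) := by
  rw [union_eq_iUnion]
  exact .iUnion fun b => by cases b <;> assumption

theorem IsHomog.sigmaHomog {S : Set X} (h : IsHomog c S) : SigmaHomog c S :=
  ⟨{S}, countable_singleton S, by simpa, by simp⟩

theorem Set.Nonempty.of_not_sigmaHomog {S : Set X} (h : ¬ SigmaHomog c S) : S.Nonempty :=
  nonempty_iff_ne_empty.2 fun hS => h ⟨∅, countable_empty, by simp, by simp [hS]⟩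

theorem exists_ne_color_eq_of_not_sigmaHomog {S : Set X} (h : ¬ SigmaHomog c S) (i : Fin 2) :
    ∃ p ∈ S, ∃ q ∈ S, p ≠ q ∧ c p q = i := by
  by_contra! hne
  refine h (IsHomog.sigmaHomog ⟨1 - i, fun p hp q hq hpq => ?_⟩)
  have : ∀ a b : Fin 2, a ≠ b → a = 1 - b := by decide
  exact this _ _ (hne p hp q hq hpq)

end SigmaHomog

section Condensation

variable {X Y : Type*} [TopologicalSpace Y] {c : X → X → Fin 2} {g : Y → X}

variable (c g) in
def condensation : Set Y :=
  {u | ∀ V ∈ 𝓝 u, ¬ SigmaHomog c (g '' V)}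

theorem sigmaHomog_image_compl_condensation [HereditarilyLindelofSpace Y] :
    SigmaHomog c (g '' (condensation c g)ᶜ) := by
  have hloc : ∀ u ∈ (condensation c g)ᶜ, ∃ V ∈ 𝓝 u, SigmaHomog c (g '' V) := by
    intro u hu
    simpa [condensation] using hu
  choose V hV hσ using hloc
  obtain ⟨t, ht, hcov⟩ :=
    (HereditarilyLindelofSpace.isLindelof _).elim_nhds_subcover' V hV
  have : Countable t := ht.to_subtype
  refine (SigmaHomog.iUnion fun u : t => hσ u.1 u.1.2).mono ?_
  rw [← image_iUnion, biUnion_eq_iUnion] at *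
  exact image_mono hcov

theorem not_sigmaHomog_image_inter_condensation [HereditarilyLindelofSpace Y] {W : Set Y}
    (hW : ¬ SigmaHomog c (g '' W)) : ¬ SigmaHomog c (g '' (W ∩ condensation c g)) := fun h =>
  hW <| (h.union sigmaHomog_image_compl_condensation).mono <| by
    rw [← image_union]
    exact image_mono fun u hu => (em (u ∈ condensation c g)).imp (⟨hu, ·⟩) id

end Condensation

theorem ContColoring.exists_open_nhds {X : Type*} [TopologicalSpace X] [T2Space X]
    {c : X → X → Fin 2} (hcont : ContColoring c) {p q : X} (hpq : p ≠ q) :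
    ∃ P Q : Set X, IsOpen P ∧ IsOpen Q ∧ p ∈ P ∧ q ∈ Q ∧ Disjoint P Q ∧
      ∀ x ∈ P, ∀ y ∈ Q, c x y = c p q := by
  have hpre : (fun z : {z : X × X // z.1 ≠ z.2} => c z.1.1 z.1.2) ⁻¹' {c p q} ∈
      𝓝 ⟨(p, q), hpq⟩ :=
    hcont.continuousAt.preimage_mem_nhds (isOpen_discrete _ |>.mem_nhds rfl)
  rw [nhds_subtype_eq_comap, mem_comap] at hpre
  obtain ⟨O, hO, hOsub⟩ := hpre
  obtain ⟨P', hP', Q', hQ', hPQ'⟩ := mem_nhds_prod_iff.1 hO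
  obtain ⟨P, hPP', hP, hpP⟩ := mem_nhds_iff.1 hP'
  obtain ⟨Q, hQQ', hQ, hqQ⟩ := mem_nhds_iff.1 hQ'
  obtain ⟨U, V, hU, hV, hpU, hqV, hUV⟩ := t2_separation hpq
  refine ⟨P ∩ U, Q ∩ V, hP.inter hU, hQ.inter hV, ⟨hpP, hpU⟩, ⟨hqQ, hqV⟩,
    hUV.mono inter_subset_right inter_subset_right, fun x hx y hy => ?_⟩
  have hxy : x ≠ y := hUV.ne_of_mem hx.2 hy.2
  exact hOsub (a := ⟨(x, y), hxy⟩) (hPQ' ⟨hPP' hx.1, hQQ' hy.1⟩)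

theorem exists_isOpen_mem_closure_subset_ediam_le {Y : Type*} [PseudoEMetricSpace Y]
    {u : Y} {U : Set Y} (hU : U ∈ 𝓝 u) {ε : ℝ≥0∞} (hε : 0 < ε) :
    ∃ V : Set Y, IsOpen V ∧ u ∈ V ∧ closure V ⊆ U ∧ Metric.ediam V ≤ ε := by
  obtain ⟨r, hr, hrU⟩ := Metric.nhds_basis_closedEBall.mem_iff.1 hU
  set ρ := min r (ε / 2)
  have hρ : 0 < ρ := lt_min hr (ENNReal.half_pos hε.ne')
  refine ⟨Metric.eball u ρ, Metric.isOpen_eball, Metric.mem_eball_self hρ, ?_, ?_⟩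
  · refine (closure_minimal Metric.eball_subset_closedEBall Metric.isClosed_closedEBall).trans ?_
    exact (Metric.closedEBall_subset_closedEBall (min_le_left _ _)).trans hrU
  · calc Metric.ediam (Metric.eball u ρ) ≤ 2 * ρ := Metric.ediam_eball_le
      _ ≤ 2 * (ε / 2) := by gcongr; exact min_le_right _ _
      _ = ε := ENNReal.mul_div_cancel two_ne_zero ENNReal.ofNat_ne_top

section Splitting

variable {X Y : Type*} [PseudoEMetricSpace Y] {c : X → X → Fin 2} {g : Y → X}

theorem exists_shrink_of_mem_condensation {u : Y} (hu : u ∈ condensation c g)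
    {U : Set Y} (hU : U ∈ 𝓝 u) {ε : ℝ≥0∞} (hε : 0 < ε) :
    ∃ V : Set Y, (IsOpen V ∧ ¬ SigmaHomog c (g '' V)) ∧ closure V ⊆ U ∧ Metric.ediam V ≤ ε :=
  let ⟨V, hV, huV, hVU, hVε⟩ := exists_isOpen_mem_closure_subset_ediam_le hU hε
  ⟨V, ⟨hV, hu V (hV.mem_nhds huV)⟩, hVU, hVε⟩

theorem exists_colored_split [TopologicalSpace X] [T2Space X] [HereditarilyLindelofSpace Y]
    (hcont : ContColoring c) (hg : Continuous g) {W : Set Y} (hW : IsOpen W)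
    (hbig : ¬ SigmaHomog c (g '' W)) (i : Fin 2) {ε : ℝ≥0∞} (hε : 0 < ε) :
    ∃ W₀ W₁ : Set Y, (IsOpen W₀ ∧ ¬ SigmaHomog c (g '' W₀)) ∧
      (IsOpen W₁ ∧ ¬ SigmaHomog c (g '' W₁)) ∧ closure W₀ ⊆ W ∧ closure W₁ ⊆ W ∧
      Metric.ediam W₀ ≤ ε ∧ Metric.ediam W₁ ≤ ε ∧
      ∀ s ∈ W₀, ∀ t ∈ W₁, g s ≠ g t ∧ c (g s) (g t) = i := by
  obtain ⟨_, ⟨u, hu, rfl⟩, _, ⟨v, hv, rfl⟩, huv, hi⟩ :=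
    exists_ne_color_eq_of_not_sigmaHomog (not_sigmaHomog_image_inter_condensation hbig) i
  obtain ⟨P, Q, hP, hQ, huP, hvQ, hPQ, hcolor⟩ := hcont.exists_open_nhds huv
  obtain ⟨W₀, hW₀, hW₀W, hW₀ε⟩ := exists_shrink_of_mem_condensation hu.2
    ((hW.inter (hP.preimage hg)).mem_nhds ⟨hu.1, huP⟩) hε
  obtain ⟨W₁, hW₁, hW₁W, hW₁ε⟩ := exists_shrink_of_mem_condensation hv.2
    ((hW.inter (hQ.preimage hg)).mem_nhds ⟨hv.1, hvQ⟩) hε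
  refine ⟨W₀, W₁, hW₀, hW₁, hW₀W.trans inter_subset_left, hW₁W.trans inter_subset_left,
    hW₀ε, hW₁ε, fun s hs t ht => ?_⟩
  have hsP : g s ∈ P := (hW₀W (subset_closure hs)).2
  have htQ : g t ∈ Q := (hW₁W (subset_closure ht)).2
  exact ⟨hPQ.ne_of_mem hsP htQ, (hcolor _ hsP _ htQ).trans hi⟩

end Splitting

theorem exists_binary_tree {α : Type*} (p : α → Prop) (R : ℕ → α → α → α → Prop) {a : α}
    (ha : p a) (hsplit : ∀ n x, p x → ∃ y z, p y ∧ p z ∧ R n x y z) :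
    ∃ D : List Bool → α, (∀ l, p (D l)) ∧
      ∀ l, R l.length (D l) (D (false :: l)) (D (true :: l)) := by
  choose y z hy hz hR using hsplit
  let D : List Bool → {x // p x} := fun l => l.rec ⟨a, ha⟩ fun b l x =>
    cond b ⟨z l.length x.1 x.2, hz _ _ _⟩ ⟨y l.length x.1 x.2, hy _ _ _⟩
  exact ⟨fun l => (D l).1, fun l => (D l).2, fun l => hR _ _ (D l).2⟩

theorem CantorScheme.exists_continuous_forall_mem_res {β α : Type*} [TopologicalSpace β]
    [DiscreteTopology β] [PseudoMetricSpace α] [CompleteSpace α] {A : List β → Set α}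
    (hanti : ClosureAntitone A) (hdiam : VanishingDiam A) (hne : ∀ l, (A l).Nonempty) :
    ∃ f : (ℕ → β) → α, Continuous f ∧ ∀ x n, f x ∈ A (res x n) := by
  have hdom : ∀ x, x ∈ (inducedMap A).1 := by
    simp [hanti.map_of_vanishingDiam hdiam hne]
  exact ⟨fun x => (inducedMap A).2 ⟨x, hdom x⟩,
    hdiam.map_continuous.comp (continuous_id.subtype_mk hdom), fun x n => map_mem _ n⟩

theorem res_Delta {α : Type*} (x y : ℕ → α) : res x (Delta x y) = res y (Delta x y) :=
  res_eq_res.2 fun _ hm => by_contra fun h => (Nat.sInf_le h).not_gt hm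

theorem apply_Delta_ne {α : Type*} {x y : ℕ → α} (h : x ≠ y) : x (Delta x y) ≠ y (Delta x y) :=
  Nat.sInf_mem (Function.ne_iff.1 h)

theorem exists_cantorScheme_of_not_sigmaHomog_image {X Y : Type*} [TopologicalSpace X]
    [T2Space X] [PseudoMetricSpace Y] [HereditarilyLindelofSpace Y] {c : X → X → Fin 2}
    (hsym : SymmColoring c) (hcont : ContColoring c) {g : Y → X} (hg : Continuous g)
    (hbig : ¬ SigmaHomog c (range g)) :
    ∃ D : List Bool → Set Y, ClosureAntitone D ∧ VanishingDiam D ∧ (∀ l, (D l).Nonempty) ∧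
      ∀ l (a b : Bool), a ≠ b → ∀ s ∈ D (a :: l), ∀ t ∈ D (b :: l),
        g s ≠ g t ∧ c (g s) (g t) = if Even l.length then 0 else 1 := by
  obtain ⟨D, hD, hR⟩ := exists_binary_tree (fun W => IsOpen W ∧ ¬ SigmaHomog c (g '' W))
    (fun n W W₀ W₁ => closure W₀ ⊆ W ∧ closure W₁ ⊆ W ∧
      Metric.ediam W₀ ≤ ((n + 1 : ℕ) : ℝ≥0∞)⁻¹ ∧ Metric.ediam W₁ ≤ ((n + 1 : ℕ) : ℝ≥0∞)⁻¹ ∧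
      ∀ s ∈ W₀, ∀ t ∈ W₁, g s ≠ g t ∧ c (g s) (g t) = if Even n then 0 else 1)
    (a := univ) ⟨isOpen_univ, by rwa [image_univ]⟩ fun n W hW =>
      exists_colored_split hcont hg hW.1 hW.2 _ (ENNReal.inv_pos.2 (ENNReal.natCast_ne_top _))
  have hdiam_le : ∀ l, Metric.ediam (D l) ≤ (l.length : ℝ≥0∞)⁻¹ := by
    rintro (_ | ⟨(_ | _), l⟩)
    · simp
    exacts [(hR l).2.2.1, (hR l).2.2.2.1]
  refine ⟨D, ?_, ?_, fun l => Nonempty.of_not_sigmaHomog (hD l).2 |>.of_image, ?_⟩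
  · rintro l (_ | _)
    exacts [(hR l).1, (hR l).2.1]
  · exact fun x => tendsto_of_tendsto_of_tendsto_of_le_of_le tendsto_const_nhds
      ENNReal.tendsto_inv_nat_nhds_zero (fun _ => bot_le)
      fun n => by simpa only [res_length] using hdiam_le (res x n)
  · rintro l (_ | _) (_ | _) hab s hs t ht
    · exact absurd rfl hab
    · exact (hR l).2.2.2.2 s hs t ht
    · obtain ⟨hne, hcol⟩ := (hR l).2.2.2.2 t ht s hs
      exact ⟨hne.symm, (hsym _ _ hne.symm).trans hcol⟩
    · exact absurd rfl hab

theorem exists_embedding_cmin_of_not_sigmaHomog_range {X Y : Type*} [TopologicalSpace X]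
    [T2Space X] [TopologicalSpace Y] [PolishSpace Y] {c : X → X → Fin 2}
    (hsym : SymmColoring c) (hcont : ContColoring c) {g : Y → X} (hg : Continuous g)
    (hbig : ¬ SigmaHomog c (range g)) :
    ∃ e : (ℕ → Bool) → X, IsEmbedding e ∧ range e ⊆ range g ∧
      ∀ x y : ℕ → Bool, x ≠ y → c (e x) (e y) = cmin x y := by
  let := TopologicalSpace.upgradeIsCompletelyMetrizable Y
  obtain ⟨D, hanti, hdiam, hne, hchildren⟩ :=
    exists_cantorScheme_of_not_sigmaHomog_image hsym hcont hg hbig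
  obtain ⟨f, hf, hfD⟩ := exists_continuous_forall_mem_res hanti hdiam hne
  have hcolor : ∀ x y, x ≠ y → g (f x) ≠ g (f y) ∧ c (g (f x)) (g (f y)) = cmin x y := by
    intro x y hxy
    have hx := hfD x (Delta x y + 1)
    have hy := hfD y (Delta x y + 1)
    rw [res_succ, res_Delta] at hx
    rw [res_succ] at hy
    simpa only [res_length, cmin] using hchildren _ _ _ (apply_Delta_ne hxy) _ hx _ hy
  have hinj : Function.Injective (g ∘ f) := fun x y hxy =>
    by_contra fun hne => (hcolor x y hne).1 hxy
  exact ⟨g ∘ f, ((hg.comp hf).isClosedEmbedding hinj).isEmbedding, range_comp_subset_range _ _,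
    fun x y hxy => (hcolor x y hxy).2⟩

/-- If an analytic subset `A` of a Polish space `X` with a continuous pair-coloring `c`
cannot be covered by countably many `c`-homogeneous sets, then `c_min ≤ c ↾ A`: there is
a topological embedding of the Cantor space into `A` carrying `c_min` to `c`. -/
theorem stmt19 (X : Type) [TopologicalSpace X] [PolishSpace X]
    (c : X → X → Fin 2) (hsym : SymmColoring c) (hcont : ContColoring c)
    (A : Set X) (hA : MeasureTheory.AnalyticSet A)
    (hbig : ¬ ∃ F : Set (Set X), F.Countable ∧ (∀ H ∈ F, IsHomog c H) ∧ A ⊆ ⋃₀ F) :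
    ∃ e : (ℕ → Bool) → X, IsEmbedding e ∧ Set.range e ⊆ A ∧
      ∀ x y : ℕ → Bool, x ≠ y → c (e x) (e y) = cmin x y := by
  rcases (MeasureTheory.AnalyticSet_def A).mp hA with rfl | ⟨g, hg, rfl⟩
  · exact absurd (IsHomog.sigmaHomog ⟨0, by simp⟩) hbig
  · exact exists_embedding_cmin_of_not_sigmaHomog_range hsym hcont hg hbig
end
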